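/- arXiv:1602.02572 — 8 statements merged into one kernel-verified Lean document; each statement's English description precedes it below -/
import Mathlib

section
/- Let e : ℕ → ℝ be nonincreasing, let C > 0, C₁ > 0, p > 0 and q ∈ (0,1). Assume that for every ε ∈ (0,1) one has e(⌈C₁ · ((log C + log ε^{−1}) / log q^{−1})^{1/p}⌉) ≤ ε. Then for every natural number n ≥ 1 such that C · q^{(n/C₁)^p} < 1, one has e(n+1) ≤ C · q^{(n/C₁)^p}. -/
/-- conversely, if e is nonincreasing and satisfies the
information-complexity bound e(⌈C₁((log C + log ε⁻¹)/log q⁻¹)^{1/p}⌉) ≤ ε for all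
ε ∈ (0,1), then e(n+1) ≤ C q^{(n/C₁)^p} for all n ≥ 1 with C q^{(n/C₁)^p} < 1. -/
theorem stmt4 (e : ℕ → ℝ) (hmono : Antitone e) (C C₁ p q : ℝ) (hC : 0 < C)
    (hC₁ : 0 < C₁) (hp : 0 < p) (hq : q ∈ Set.Ioo (0:ℝ) 1)
    (he : ∀ ε : ℝ, ε ∈ Set.Ioo (0:ℝ) 1 →
      e ⌈C₁ * ((Real.log C + Real.log ε⁻¹) / Real.log q⁻¹) ^ (1 / p)⌉₊ ≤ ε) :
    ∀ n : ℕ, 1 ≤ n → C * q ^ (((n : ℝ) / C₁) ^ p) < 1 →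
      e (n + 1) ≤ C * q ^ (((n : ℝ) / C₁) ^ p) := by
  intro n hn hlt
  set ε := C * q ^ (((n : ℝ) / C₁) ^ p) with hε
  have hq0 := hq.1
  have hq1 := hq.2
  have hεpos : 0 < ε := mul_pos hC (Real.rpow_pos_of_pos hq0 _)
  have hεmem : ε ∈ Set.Ioo (0:ℝ) 1 := ⟨hεpos, hlt⟩
  have hlogq : Real.log q⁻¹ = -Real.log q := Real.log_inv q
  have hlogqpos : 0 < Real.log q⁻¹ := by
    rw [hlogq]; simpa using Real.log_neg hq0 hq1
  have hlogε : Real.log ε = Real.log C + ((n : ℝ) / C₁) ^ p * Real.log q := by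
    rw [hε, Real.log_mul (ne_of_gt hC) (ne_of_gt (Real.rpow_pos_of_pos hq0 _)),
      Real.log_rpow hq0]
  have hkey : Real.log C + Real.log ε⁻¹ = ((n : ℝ) / C₁) ^ p * Real.log q⁻¹ := by
    rw [Real.log_inv, hlogε, hlogq]; ring
  have hdiv : (Real.log C + Real.log ε⁻¹) / Real.log q⁻¹ = ((n : ℝ) / C₁) ^ p := by
    rw [hkey, mul_div_assoc, div_self (ne_of_gt hlogqpos), mul_one]
  have hnC₁ : (0:ℝ) ≤ (n : ℝ) / C₁ := div_nonneg (Nat.cast_nonneg n) hC₁.le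
  have hpow : (((n : ℝ) / C₁) ^ p) ^ (1 / p) = (n : ℝ) / C₁ := by
    rw [← Real.rpow_mul hnC₁, mul_one_div, div_self (ne_of_gt hp), Real.rpow_one]
  have harg : C₁ * ((Real.log C + Real.log ε⁻¹) / Real.log q⁻¹) ^ (1 / p) = (n : ℝ) := by
    rw [hdiv, hpow, mul_div_cancel₀ _ (ne_of_gt hC₁)]
  have := he ε hεmem
  rw [harg, Nat.ceil_natCast] at this
  exact le_trans (hmono (Nat.le_succ n)) this
end

section
/- Let e : ℕ → ℝ be nonincreasing, let E₀ > 0 with e(0) ≤ E₀, and let K > 0 and τ > 0. Assume that for every ε ∈ (0,1) there exists n ∈ ℕ with n ≤ K(1 + log ε^{−1})^{τ} and e(n) ≤ ε·E₀. Then for every n ∈ ℕ one has e(n) ≤ E₀ · exp(1 − (n/K)^{1/τ}). -/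
/-- if e is nonincreasing, e(0) ≤ E₀, and for every ε ∈ (0,1) there is
n ≤ K(1 + log ε⁻¹)^τ with e(n) ≤ ε E₀ (EC-polynomial tractability), then
e(n) ≤ E₀ exp(1 - (n/K)^{1/τ}) for all n (uniform exponential convergence). -/
theorem stmt5 (e : ℕ → ℝ) (hmono : Antitone e) (E₀ K τ : ℝ) (hE₀ : 0 < E₀)
    (he0 : e 0 ≤ E₀) (hK : 0 < K) (hτ : 0 < τ)
    (h : ∀ ε : ℝ, ε ∈ Set.Ioo (0:ℝ) 1 →
      ∃ n : ℕ, (n : ℝ) ≤ K * (1 + Real.log ε⁻¹) ^ τ ∧ e n ≤ ε * E₀) :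
    ∀ n : ℕ, e n ≤ E₀ * Real.exp (1 - ((n : ℝ) / K) ^ (1 / τ)) := by
  intro n
  set x : ℝ := ((n : ℝ) / K) ^ (1 / τ) with hx
  have hx0 : 0 ≤ x := Real.rpow_nonneg (by positivity) _
  by_cases hle : x ≤ 1
  · calc e n ≤ e 0 := hmono (Nat.zero_le n)
      _ ≤ E₀ := he0
      _ ≤ E₀ * Real.exp (1 - x) := by
          nth_rewrite 1 [← mul_one E₀]
          apply mul_le_mul_of_nonneg_left _ hE₀.le
          exact Real.one_le_exp (by linarith)
  · push_neg at hle
    set ε : ℝ := Real.exp (1 - x) with hε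
    have hεmem : ε ∈ Set.Ioo (0:ℝ) 1 := by
      constructor
      · exact Real.exp_pos _
      · rw [hε]
        exact Real.exp_lt_one_iff.mpr (by linarith)
    obtain ⟨m, hm1, hm2⟩ := h ε hεmem
    have hlog : Real.log ε⁻¹ = x - 1 := by
      rw [Real.log_inv, hε, Real.log_exp]; ring
    have hnK : (0:ℝ) ≤ (n : ℝ) / K := by positivity
    have hxt : x ^ τ = (n : ℝ) / K := by
      rw [hx, ← Real.rpow_mul hnK, one_div, inv_mul_cancel₀ hτ.ne', Real.rpow_one]
    rw [hlog] at hm1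
    have hm1' : (m : ℝ) ≤ (n : ℝ) := by
      have : (1 : ℝ) + (x - 1) = x := by ring
      rw [this, hxt] at hm1
      calc (m : ℝ) ≤ K * ((n:ℝ)/K) := hm1
        _ = (n : ℝ) := by field_simp
    have hmn : m ≤ n := by exact_mod_cast hm1'
    calc e n ≤ e m := hmono hmn
      _ ≤ ε * E₀ := hm2
      _ = E₀ * Real.exp (1 - x) := by rw [hε]; ring
end

section
/- Let ω ∈ (0,1), let s ≥ 1, and let a_1,…,a_s and b_1,…,b_s be reals with a_j ≥ a_* > 0 and b_j ≥ b_* > 0 for all j. Then for every η > 0 and every ε > 0, the set {h ∈ ℤ^s : ω_h > ε²} is finite and its cardinality is at most ε^{−2η} · ∏_{j=1}^s (1 + 2 D_η ω^{η a_j}), where D_η := ∑_{h=1}^∞ ω^{η a_*(h^{b_*}−1)} (a convergent series). -/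
/-!
Rankin's trick: every `h` in the set satisfies `1 ≤ ε^{-2η} ω_h^η`, so its cardinality is at
most `ε^{-2η} ∑_h ω_h^η`, and this sum over `ℤ^s` factors into the one-dimensional sums
`∑_{x ∈ ℤ} ω^{η a_j |x|^{b_j}} = 1 + 2 ∑_{n ≥ 1} ω^{η a_j n^{b_j}}`.
Since `a_j n^{b_j} ≥ a_j + a_* (n^{b_*} - 1)` for `n ≥ 1`, each of these is at most
`1 + 2 D_η ω^{η a_j}`. The same bound for all finite subsets gives finiteness.
-/

open Filter

theorem Set.finite_and_ncard_le_of_forall_finset_card_le {α : Type*} {S : Set α} {B : ℝ}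
    (h : ∀ T : Finset α, ↑T ⊆ S → (T.card : ℝ) ≤ B) : S.Finite ∧ (S.ncard : ℝ) ≤ B := by
  have hfin : S.Finite := by
    by_contra hinf
    obtain ⟨T, hTS, hT⟩ := Set.Infinite.exists_subset_card_eq hinf (⌊B⌋₊ + 1)
    have hle := h T hTS
    rw [hT, Nat.cast_add_one] at hle
    linarith [Nat.lt_floor_add_one B]
  refine ⟨hfin, ?_⟩
  rw [Set.ncard_eq_toFinset_card S hfin]
  exact h _ hfin.coe_toFinset.subset

theorem Finset.sum_prod_le_prod_tsum {ι κ : Type*} [Fintype ι] {φ : ι → κ → ℝ}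
    (hφ : ∀ i x, 0 ≤ φ i x) (hsum : ∀ i, Summable (φ i)) (T : Finset (ι → κ)) :
    ∑ h ∈ T, ∏ i, φ i (h i) ≤ ∏ i, ∑' x, φ i x := by
  classical
  calc ∑ h ∈ T, ∏ i, φ i (h i)
      ≤ ∑ h ∈ Fintype.piFinset fun i => T.image (· i), ∏ i, φ i (h i) :=
        Finset.sum_le_sum_of_subset_of_nonneg
          (fun h hh => Fintype.mem_piFinset.2 fun i => Finset.mem_image_of_mem _ hh)
          fun h _ _ => Finset.prod_nonneg fun i _ => hφ i (h i)
    _ = ∏ i, ∑ x ∈ T.image (· i), φ i x := (Finset.prod_univ_sum _ _).symm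
    _ ≤ ∏ i, ∑' x, φ i x :=
        Finset.prod_le_prod (fun i _ => Finset.sum_nonneg fun x _ => hφ i x)
          fun i _ => (hsum i).sum_le_tsum _ fun x _ => hφ i x

theorem summable_rpow_natCast_rpow {q p : ℝ} (hq0 : 0 < q) (hq1 : q < 1) (hp : 0 < p) :
    Summable fun n : ℕ => q ^ ((n : ℝ) ^ p) := by
  have hlog : 0 < -Real.log q := neg_pos.2 (Real.log_neg hq0 hq1)
  have hnp : Tendsto (fun n : ℕ => (n : ℝ) ^ p) atTop atTop :=
    (tendsto_rpow_atTop hp).comp tendsto_natCast_atTop_atTop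
  -- `q^{n^p} = exp(-(-log q) n^p) = o((n^p)^{-2/p}) = o(n^{-2})`
  have ho := (isLittleO_exp_neg_mul_rpow_atTop hlog (-2 / p)).comp_tendsto hnp
  refine summable_of_isBigO_nat' (Real.summable_nat_rpow.2 (by norm_num : (-2 : ℝ) < -1))
    (ho.isBigO.congr (fun n => ?_) fun n => ?_)
  · simp only [Function.comp_apply, Real.rpow_def_of_pos hq0, neg_neg]
  · simp only [Function.comp_apply]
    rw [← Real.rpow_mul n.cast_nonneg, mul_div_cancel₀ _ hp.ne']

theorem summable_rpow_mul_add_one_rpow_sub_one {ω c p : ℝ} (hω0 : 0 < ω) (hω1 : ω < 1)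
    (hc : 0 < c) (hp : 0 < p) :
    Summable fun n : ℕ => ω ^ (c * (((n : ℝ) + 1) ^ p - 1)) := by
  have hq0 : 0 < ω ^ c := Real.rpow_pos_of_pos hω0 c
  refine (((summable_nat_add_iff 1).2 (summable_rpow_natCast_rpow hq0
    (Real.rpow_lt_one hω0.le hω1 hc) hp)).div_const (ω ^ c)).congr fun n => ?_
  rw [Real.rpow_mul hω0.le, Real.rpow_sub hq0, Real.rpow_one, Nat.cast_add_one]

theorem add_mul_rpow_sub_one_le_mul_rpow {x a a' b b' : ℝ} (hx : 1 ≤ x) (ha' : 0 ≤ a')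
    (haa : a' ≤ a) (hb' : 0 ≤ b') (hbb : b' ≤ b) :
    a + a' * (x ^ b' - 1) ≤ a * x ^ b := by
  have h1 : 1 ≤ x ^ b' := Real.one_le_rpow hx hb'
  have h2 : x ^ b' ≤ x ^ b := Real.rpow_le_rpow_of_exponent_le hx hbb
  nlinarith

section OneDimensional

variable {ω a a' b b' η : ℝ}

theorem rpow_mul_rpow_le_rpow_mul_rpow_sub_one (hω0 : 0 < ω) (hω1 : ω < 1) (ha' : 0 ≤ a')
    (haa : a' ≤ a) (hb' : 0 ≤ b') (hbb : b' ≤ b) (hη : 0 ≤ η) {x : ℝ} (hx : 1 ≤ x) :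
    ω ^ (η * (a * x ^ b)) ≤ ω ^ (η * a) * ω ^ (η * a' * (x ^ b' - 1)) := by
  rw [← Real.rpow_add hω0]
  refine Real.rpow_le_rpow_of_exponent_ge hω0 hω1.le ?_
  have := mul_le_mul_of_nonneg_left (add_mul_rpow_sub_one_le_mul_rpow hx ha' haa hb' hbb) hη
  linarith

theorem summable_and_tsum_int_rpow_mul_abs_rpow_le (hω0 : 0 < ω) (hω1 : ω < 1) (ha' : 0 < a')
    (haa : a' ≤ a) (hb' : 0 < b') (hbb : b' ≤ b) (hη : 0 < η) :
    Summable (fun x : ℤ => ω ^ (η * (a * |(x : ℝ)| ^ b))) ∧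
      ∑' x : ℤ, ω ^ (η * (a * |(x : ℝ)| ^ b)) ≤
        1 + 2 * (∑' n : ℕ, ω ^ (η * a' * (((n : ℝ) + 1) ^ b' - 1))) * ω ^ (η * a) := by
  set f : ℤ → ℝ := fun x => ω ^ (η * (a * |(x : ℝ)| ^ b))
  have hD := summable_rpow_mul_add_one_rpow_sub_one hω0 hω1 (mul_pos hη ha') hb'
  have hf_neg : ∀ x, f (-x) = f x := fun x => by simp only [f, Int.cast_neg, abs_neg]
  have hf0 : f 0 = 1 := by
    simp [f, Real.zero_rpow (hb'.trans_le hbb).ne']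
  have hterm (n : ℕ) : f (n + 1) ≤ ω ^ (η * a) * ω ^ (η * a' * (((n : ℝ) + 1) ^ b' - 1)) := by
    have hn : (1 : ℝ) ≤ (n : ℝ) + 1 := le_add_of_nonneg_left n.cast_nonneg
    simp only [f, Int.cast_add, Int.cast_natCast, Int.cast_one, abs_of_pos (one_pos.trans_le hn)]
    exact rpow_mul_rpow_le_rpow_mul_rpow_sub_one hω0 hω1 ha'.le haa hb'.le hbb hη.le hn
  have hpos : Summable fun n : ℕ => f (n + 1) :=
    (hD.mul_left _).of_nonneg_of_le (fun n => Real.rpow_nonneg hω0.le _) hterm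
  have hneg : Summable fun n : ℕ => f (-(n + 1)) := by simpa only [hf_neg] using hpos
  refine ⟨hpos.of_add_one_of_neg_add_one hneg, ?_⟩
  have htail := hpos.tsum_le_tsum hterm (hD.mul_left _)
  rw [tsum_mul_left] at htail
  rw [tsum_of_add_one_of_neg_add_one hpos hneg]
  simp only [hf_neg, hf0]
  linarith

end OneDimensional

theorem stmt7_general (ω : ℝ) (hω : ω ∈ Set.Ioo (0:ℝ) 1) (s : ℕ)
    (a b : Fin s → ℝ) (aStar bStar : ℝ) (haStar : 0 < aStar) (hbStar : 0 < bStar)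
    (ha : ∀ j, aStar ≤ a j) (hb : ∀ j, bStar ≤ b j)
    (η ε : ℝ) (hη : 0 < η) (hε : 0 < ε) :
    Summable (fun h : ℕ => ω ^ (η * aStar * (((h : ℝ) + 1) ^ bStar - 1))) ∧
    {h : Fin s → ℤ | ε ^ 2 < ω ^ (∑ j, a j * |(h j : ℝ)| ^ (b j))}.Finite ∧
    (({h : Fin s → ℤ | ε ^ 2 < ω ^ (∑ j, a j * |(h j : ℝ)| ^ (b j))}.ncard : ℝ) ≤
      ε ^ (-(2 * η)) *
        ∏ j, (1 + 2 * (∑' h : ℕ, ω ^ (η * aStar * (((h : ℝ) + 1) ^ bStar - 1))) *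
          ω ^ (η * a j))) := by
  obtain ⟨hω0, hω1⟩ := hω
  have hφ j := summable_and_tsum_int_rpow_mul_abs_rpow_le hω0 hω1 haStar (ha j) hbStar (hb j) hη
  refine ⟨summable_rpow_mul_add_one_rpow_sub_one hω0 hω1 (mul_pos hη haStar) hbStar,
    Set.finite_and_ncard_le_of_forall_finset_card_le fun T hT => ?_⟩
  have hrankin : ∀ h ∈ T, ε ^ (2 * η) ≤ ∏ j, ω ^ (η * (a j * |(h j : ℝ)| ^ b j)) := by
    intro h hh
    rw [← Real.rpow_sum_of_pos hω0, ← Finset.mul_sum, mul_comm η, Real.rpow_mul hω0.le,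
      Real.rpow_mul hε.le, Real.rpow_two]
    exact Real.rpow_le_rpow (by positivity) (hT hh).le hη.le
  have hε' : 0 < ε ^ (2 * η) := Real.rpow_pos_of_pos hε _
  calc (T.card : ℝ)
      ≤ ε ^ (-(2 * η)) * ∑ h ∈ T, ∏ j, ω ^ (η * (a j * |(h j : ℝ)| ^ b j)) := by
        rw [Real.rpow_neg hε.le, inv_mul_eq_div, le_div_iff₀ hε', ← nsmul_eq_mul]
        exact T.card_nsmul_le_sum _ _ hrankin
    _ ≤ ε ^ (-(2 * η)) * ∏ j, ∑' x : ℤ, ω ^ (η * (a j * |(x : ℝ)| ^ b j)) := by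
        gcongr
        exact T.sum_prod_le_prod_tsum (fun j x => Real.rpow_nonneg hω0.le _) fun j => (hφ j).1
    _ ≤ _ := by
        gcongr with j
        exact (hφ j).2

/-- for ω ∈ (0,1), weights a_j ≥ a_* > 0, b_j ≥ b_* > 0, and any
η > 0, ε > 0, the series D_η = ∑_{h=1}^∞ ω^{η a_*(h^{b_*}-1)} converges, the set
{h ∈ ℤ^s : ω_h > ε²} is finite, and its cardinality is at most
ε^{-2η} ∏_{j=1}^s (1 + 2 D_η ω^{η a_j}). -/
theorem stmt7 (ω : ℝ) (hω : ω ∈ Set.Ioo (0:ℝ) 1) (s : ℕ) (hs : 1 ≤ s)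
    (a b : Fin s → ℝ) (aStar bStar : ℝ) (haStar : 0 < aStar) (hbStar : 0 < bStar)
    (ha : ∀ j, aStar ≤ a j) (hb : ∀ j, bStar ≤ b j)
    (η ε : ℝ) (hη : 0 < η) (hε : 0 < ε) :
    Summable (fun h : ℕ => ω ^ (η * aStar * (((h : ℝ) + 1) ^ bStar - 1))) ∧
    {h : Fin s → ℤ | ε ^ 2 < ω ^ (∑ j, a j * |(h j : ℝ)| ^ (b j))}.Finite ∧
    (({h : Fin s → ℤ | ε ^ 2 < ω ^ (∑ j, a j * |(h j : ℝ)| ^ (b j))}.ncard : ℝ) ≤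
      ε ^ (-(2 * η)) *
        ∏ j, (1 + 2 * (∑' h : ℕ, ω ^ (η * aStar * (((h : ℝ) + 1) ^ bStar - 1))) *
          ω ^ (η * a j))) :=
  stmt7_general ω hω s a b aStar bStar haStar hbStar ha hb η ε hη hε
end

section
/- Let ω ∈ (0,1), let κ > 1, and let (a_j)_{j≥1}, (b_j)_{j≥1} be sequences of reals with a_j ≥ a_* > 0 and b_j ≥ b_* > 0 for all j. For s ≥ 1 and ε ∈ (0,1) let N(ε,s) := #{h ∈ ℤ^s : ω_h > ε²} (a finite number, at least 1). Then for every θ > 0 there exists T > 0 such that for all s ≥ 1 and ε ∈ (0,1) with s + log ε^{−1} ≥ T, one has log N(ε,s) ≤ θ · (s + (log ε^{−1})^{κ}). -/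
/-!
If `ω_h > ε²` then `∑ a_j |h_j|^{b_j} < 2 log ε⁻¹ / log ω⁻¹`, so `h` has at most
`m = c log ε⁻¹` nonzero coordinates, each of absolute value at most `n = ⌈m^{1/b_*}⌉`.
Points of the box `[-n, n]^s` with at most `m` nonzero coordinates are counted by giving each
point the weight `t^{#zero coordinates}`: the weights add up to `(t + 2n)^s` and every sparse point
weighs at least `t^{s-m}`, so for `t = 1 + 2n/θ` the logarithm of the count is at most
`θ s + m log t = θ s + O(log ε⁻¹ · log log ε⁻¹)`. This is `o((log ε⁻¹)^κ)` because `κ > 1`,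
and when `log ε⁻¹` stays bounded, `s` is large and `θ s` absorbs it.
-/

open Filter Real Finset Asymptotics

section Sparse

variable {ι α : Type*} [Fintype ι] [DecidableEq ι] [DecidableEq α]

theorem sum_piFinset_pow_card_filter_eq {R : Type*} [CommSemiring R] (A : Finset α) {z : α}
    (hz : z ∈ A) (t : R) :
    ∑ h ∈ Fintype.piFinset (fun _ : ι => A), t ^ #{j | h j = z} =
      (t + #(A.erase z)) ^ Fintype.card ι := by
  have hfactor : ∑ x ∈ A, (if x = z then t else 1) = t + #(A.erase z) := by
    rw [← add_sum_erase A _ hz, if_pos rfl, sum_congr rfl fun x hx => if_neg (ne_of_mem_erase hx),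
      sum_const, nsmul_one]
  have hpow (h : ι → α) : t ^ #{j | h j = z} = ∏ j, if h j = z then t else 1 := by
    rw [prod_ite, prod_const, prod_const, one_pow, mul_one]
  rw [sum_congr rfl fun h _ => hpow h,
    ← prod_univ_sum (fun _ => A) fun _ x => if x = z then t else 1, hfactor, prod_const, card_univ]

theorem card_filter_sparse_mul_rpow_le (A : Finset α) {z : α} (hz : z ∈ A) (m : ℝ) {t : ℝ}
    (ht : 1 ≤ t) :
    (#{h ∈ Fintype.piFinset (fun _ : ι => A) | (#{j | h j ≠ z} : ℝ) ≤ m} : ℝ) *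
        t ^ (Fintype.card ι - m) ≤ (t + #(A.erase z)) ^ Fintype.card ι := by
  rw [← sum_piFinset_pow_card_filter_eq A hz, ← nsmul_eq_mul, ← sum_const]
  refine (sum_le_sum fun h hh => ?_).trans
    (sum_le_sum_of_subset_of_nonneg (filter_subset _ _) fun _ _ _ => by positivity)
  have hcard : (Fintype.card ι : ℝ) - m ≤ #{j | h j = z} := by
    have hsplit : (#{j | h j = z} : ℝ) + #{j | h j ≠ z} = Fintype.card ι := by
      exact_mod_cast card_univ (α := ι) ▸ card_filter_add_card_filter_not (s := univ) _
    linarith [(mem_filter.1 hh).2]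
  rw [← rpow_natCast]
  exact rpow_le_rpow_of_exponent_le ht hcard

theorem log_card_filter_sparse_le (A : Finset α) {z : α} (hz : z ∈ A) {m θ : ℝ} (hm : 0 ≤ m)
    (hθ : 0 < θ) :
    log #{h ∈ Fintype.piFinset (fun _ : ι => A) | (#{j | h j ≠ z} : ℝ) ≤ m} ≤
      θ * Fintype.card ι + m * log (1 + #(A.erase z) / θ) := by
  set N : ℝ := (#(A.erase z) : ℝ)
  set t : ℝ := 1 + N / θ
  have ht : 1 ≤ t := le_add_of_nonneg_right (by positivity)
  have hP : 0 < #{h ∈ Fintype.piFinset (fun _ : ι => A) | (#{j | h j ≠ z} : ℝ) ≤ m} :=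
    card_pos.2 ⟨fun _ => z, by simp [hz, hm]⟩
  have hcount := log_le_log (by positivity) (card_filter_sparse_mul_rpow_le A hz m ht)
  rw [log_mul (by positivity) (by positivity), log_rpow (by positivity), log_pow] at hcount
  have hratio : log (t + N) - log t ≤ θ := by
    rw [← log_div (by positivity) (by positivity)]
    refine (log_le_sub_one_of_pos (by positivity)).trans ?_
    rw [add_div, div_self (by positivity), add_sub_cancel_left, div_le_iff₀ (by positivity)]
    simp only [t, mul_add, mul_one, mul_div_cancel₀ _ hθ.ne']
    linarith [show 0 ≤ N by positivity]
  nlinarith [show (0 : ℝ) ≤ Fintype.card ι by positivity]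

end Sparse

theorem log_natCast_le_log_natCast {m n : ℕ} (h : m ≤ n) : log m ≤ log n := by
  rcases m.eq_zero_or_pos with rfl | hm
  · rw [Nat.cast_zero, log_zero]
    exact log_natCast_nonneg n
  · exact log_le_log (by exact_mod_cast hm) (by exact_mod_cast h)

theorem mul_abs_rpow_le_mul_abs_rpow {a a' b b' : ℝ} (ha : a ≤ a') (ha0 : 0 ≤ a) (hb : b ≤ b')
    (hb0 : 0 < b) (k : ℤ) : a * |(k : ℝ)| ^ b ≤ a' * |(k : ℝ)| ^ b' := by
  rcases eq_or_ne k 0 with rfl | hk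
  · simp [zero_rpow hb0.ne', zero_rpow (hb0.trans_le hb).ne']
  have h1 : 1 ≤ |(k : ℝ)| := by exact_mod_cast Int.one_le_abs hk
  exact mul_le_mul ha (rpow_le_rpow_of_exponent_le h1 hb) (by positivity) (ha0.trans ha)

theorem mem_sparse_box_of_sum_lt {s : ℕ} {aStar bStar m : ℝ} (haStar : 0 < aStar)
    (hbStar : 0 < bStar) {h : Fin s → ℤ} (hsum : ∑ j, aStar * |(h j : ℝ)| ^ bStar < aStar * m) :
    h ∈ {h ∈ Fintype.piFinset (fun _ : Fin s => Icc (-(⌈m ^ bStar⁻¹⌉₊ : ℤ)) ⌈m ^ bStar⁻¹⌉₊) |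
      (#{j | h j ≠ 0} : ℝ) ≤ m} := by
  have hterm (j : Fin s) : aStar * |(h j : ℝ)| ^ bStar < aStar * m :=
    (single_le_sum (fun i _ => by positivity) (mem_univ j)).trans_lt hsum
  have hm : 0 < m := pos_of_mul_pos_right ((sum_nonneg fun j _ => by positivity).trans_lt hsum)
    haStar.le
  refine mem_filter.2 ⟨Fintype.mem_piFinset.2 fun j => mem_Icc.2 (abs_le.1 ?_), ?_⟩
  · have hlt : |(h j : ℝ)| < m ^ bStar⁻¹ :=
      (lt_rpow_inv_iff_of_pos (abs_nonneg _) hm.le hbStar).2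
        (lt_of_mul_lt_mul_left (hterm j) haStar.le)
    exact_mod_cast hlt.le.trans (Nat.le_ceil _)
  · have hsupp : #{j | h j ≠ 0} • aStar ≤ ∑ j ∈ {j | h j ≠ 0}, aStar * |(h j : ℝ)| ^ bStar := by
      refine card_nsmul_le_sum _ _ _ fun j hj => le_mul_of_one_le_right haStar.le ?_
      exact one_le_rpow (by exact_mod_cast Int.one_le_abs (mem_filter.1 hj).2) hbStar.le
    have := hsupp.trans (sum_le_sum_of_subset_of_nonneg (filter_subset _ _)
      fun j _ _ => by positivity)
    rw [nsmul_eq_mul] at this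
    nlinarith

theorem lt_div_log_of_sq_lt_rpow {ω ε x : ℝ} (hω : ω ∈ Set.Ioo (0 : ℝ) 1) (hε : 0 < ε)
    (h : ε ^ 2 < ω ^ x) : x < 2 * log ε⁻¹ / log ω⁻¹ := by
  have hlog := log_lt_log (by positivity) h
  rw [log_pow, log_rpow hω.1, ← neg_neg (log ω), ← log_inv, ← neg_neg (log ε), ← log_inv] at hlog
  rw [lt_div_iff₀ (log_pos (one_lt_inv₀ hω.1 |>.2 hω.2))]
  push_cast at hlog
  linarith

theorem card_Icc_neg_erase_zero (n : ℕ) : #((Icc (-(n : ℤ)) n).erase 0) = 2 * n := by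
  rw [card_erase_of_mem (by simp), Int.card_Icc]
  omega

-- For `c = 2 / (a_* log ω⁻¹)` and `L = log ε⁻¹`: the points counted in `stmt8` have at most
-- `c L` nonzero coordinates, all in `[-n, n]` with `n = ⌈(c L)^{1/b_*}⌉₊`, and this is the
-- term `m log (1 + 2n/θ)` of `log_card_filter_sparse_le` for them.
noncomputable def sparseLogBound (θ c β L : ℝ) : ℝ :=
  c * L * log (1 + 2 * ⌈(c * L) ^ β⁻¹⌉₊ / θ)

theorem sparseLogBound_nonneg {θ c β L : ℝ} (hθ : 0 ≤ θ) (hc : 0 ≤ c) (hL : 0 ≤ L) :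
    0 ≤ sparseLogBound θ c β L :=
  mul_nonneg (by positivity) (log_nonneg (le_add_of_nonneg_right (by positivity)))

theorem monotoneOn_sparseLogBound {θ c β : ℝ} (hθ : 0 ≤ θ) (hc : 0 ≤ c) (hβ : 0 ≤ β) :
    MonotoneOn (sparseLogBound θ c β) (Set.Ici 0) := by
  intro L (hL : 0 ≤ L) L' (hL' : 0 ≤ L') hLL'
  have hceil : (⌈(c * L) ^ β⁻¹⌉₊ : ℝ) ≤ ⌈(c * L') ^ β⁻¹⌉₊ := by gcongr
  unfold sparseLogBound
  gcongr
  exact log_nonneg (le_add_of_nonneg_right (by positivity))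

theorem sparseLogBound_le {θ c β L : ℝ} (hθ : 0 < θ) (hc : 0 ≤ c) (hβ : 0 < β) (hL : 1 ≤ L) :
    sparseLogBound θ c β L ≤ c * L * (log (1 + 2 * (c ^ β⁻¹ + 1) / θ) + β⁻¹ * log L) := by
  have hLβ : 1 ≤ L ^ β⁻¹ := one_le_rpow hL (by positivity)
  have hceil : (⌈(c * L) ^ β⁻¹⌉₊ : ℝ) ≤ (c ^ β⁻¹ + 1) * L ^ β⁻¹ := by
    refine (Nat.ceil_lt_add_one (by positivity)).le.trans ?_
    rw [mul_rpow hc (by linarith)]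
    nlinarith
  have harg : 1 + 2 * ⌈(c * L) ^ β⁻¹⌉₊ / θ ≤ (1 + 2 * (c ^ β⁻¹ + 1) / θ) * L ^ β⁻¹ := by
    calc 1 + 2 * ⌈(c * L) ^ β⁻¹⌉₊ / θ ≤ L ^ β⁻¹ + 2 * ((c ^ β⁻¹ + 1) * L ^ β⁻¹) / θ := by
          gcongr
      _ = (1 + 2 * (c ^ β⁻¹ + 1) / θ) * L ^ β⁻¹ := by ring
  unfold sparseLogBound
  gcongr
  calc log (1 + 2 * ⌈(c * L) ^ β⁻¹⌉₊ / θ)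
      ≤ log ((1 + 2 * (c ^ β⁻¹ + 1) / θ) * L ^ β⁻¹) := log_le_log (by positivity) harg
    _ = log (1 + 2 * (c ^ β⁻¹ + 1) / θ) + β⁻¹ * log L := by
      rw [log_mul (by positivity) (by positivity), log_rpow (by linarith)]

theorem sparseLogBound_isLittleO {θ c β κ : ℝ} (hθ : 0 < θ) (hc : 0 ≤ c) (hβ : 0 < β)
    (hκ : 1 < κ) : sparseLogBound θ c β =o[atTop] fun L => L ^ κ := by
  set C := log (1 + 2 * (c ^ β⁻¹ + 1) / θ)
  have hlog : (fun L => C + β⁻¹ * log L) =o[atTop] fun L => L ^ (κ - 1) :=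
    (isLittleO_const_left.2 (Or.inr (tendsto_norm_atTop_atTop.comp
      (tendsto_rpow_atTop (by linarith))))).add
      ((isLittleO_log_rpow_atTop (by linarith)).const_mul_left β⁻¹)
  have hmain : (fun L => c * L * (C + β⁻¹ * log L)) =o[atTop] fun L => L ^ κ := by
    refine ((isBigO_const_mul_self c id atTop).mul_isLittleO hlog).congr' .rfl ?_
    filter_upwards [eventually_gt_atTop 0] with L hL
    rw [id, ← rpow_one_add' hL.le (by linarith), add_sub_cancel]
  refine IsBigO.trans_isLittleO (IsBigO.of_bound 1 ?_) hmain
  filter_upwards [eventually_ge_atTop 1] with L hL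
  have h0 := sparseLogBound_nonneg hθ.le hc (β := β) (zero_le_one.trans hL)
  have h1 := sparseLogBound_le hθ hc hβ hL
  rw [norm_of_nonneg h0, norm_of_nonneg (h0.trans h1), one_mul]
  exact h1

theorem exists_le_mul_add_of_isLittleO {f g : ℝ → ℝ} (hf : MonotoneOn f (Set.Ici 0))
    (hfg : f =o[atTop] g) (hg : ∀ y, 0 ≤ y → 0 ≤ g y) {θ : ℝ} (hθ : 0 < θ) :
    ∃ T, 0 < T ∧ ∀ x y, 0 ≤ x → 0 ≤ y → T ≤ x + y → f y ≤ θ * (x + g y) := by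
  obtain ⟨Y, hY⟩ := eventually_atTop.1 (hfg.bound hθ)
  set Y₀ := max Y 0
  refine ⟨Y₀ + |f Y₀| / θ + 1, by positivity, fun x y hx hy hT => ?_⟩
  have hgy := hg y hy
  rcases le_or_gt Y₀ y with hYy | hyY
  · have := hY y ((le_max_left _ _).trans hYy)
    rw [norm_eq_abs, norm_of_nonneg hgy] at this
    nlinarith [le_abs_self (f y)]
  · have hfy : f y ≤ |f Y₀| :=
      (hf hy (Set.mem_Ici.2 (le_max_right Y 0)) hyY.le).trans (le_abs_self _)
    have hx' : |f Y₀| / θ ≤ x := by linarith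
    rw [div_le_iff₀ hθ] at hx'
    nlinarith

theorem log_ncard_le_sparseLogBound {ω ε θ : ℝ} (hω : ω ∈ Set.Ioo (0 : ℝ) 1) (hε0 : 0 < ε)
    (hε1 : ε ≤ 1) (hθ : 0 < θ) {a b : ℕ → ℝ} {aStar bStar : ℝ} (haStar : 0 < aStar)
    (hbStar : 0 < bStar) (ha : ∀ j, aStar ≤ a j) (hb : ∀ j, bStar ≤ b j) (s : ℕ) :
    log {h : Fin s → ℤ | ε ^ 2 < ω ^ (∑ j : Fin s, a j * |(h j : ℝ)| ^ (b j))}.ncard ≤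
      θ * s + sparseLogBound θ (2 / (aStar * log ω⁻¹)) bStar (log ε⁻¹) := by
  have hlω : 0 < log ω⁻¹ := log_pos (one_lt_inv₀ hω.1 |>.2 hω.2)
  set c := 2 / (aStar * log ω⁻¹) with hc
  set L := log ε⁻¹
  have hm : 0 ≤ c * L := mul_nonneg (by positivity) (log_nonneg (one_le_inv₀ hε0 |>.2 hε1))
  set n := ⌈(c * L) ^ bStar⁻¹⌉₊
  set P := {h ∈ Fintype.piFinset (fun _ : Fin s => Icc (-(n : ℤ)) n) | (#{j | h j ≠ 0} : ℝ) ≤ c * L}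
  have hsub : {h : Fin s → ℤ | ε ^ 2 < ω ^ (∑ j : Fin s, a j * |(h j : ℝ)| ^ (b j))} ⊆ P := by
    intro h hh
    refine mem_sparse_box_of_sum_lt haStar hbStar ?_
    calc ∑ j : Fin s, aStar * |(h j : ℝ)| ^ bStar
        ≤ ∑ j : Fin s, a j * |(h j : ℝ)| ^ (b j) :=
          sum_le_sum fun j _ => mul_abs_rpow_le_mul_abs_rpow (ha j) haStar.le (hb j) hbStar _
      _ < 2 * L / log ω⁻¹ := lt_div_log_of_sq_lt_rpow hω hε0 hh
      _ = aStar * (c * L) := by rw [hc]; field_simp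
  have hcard := (Set.ncard_le_ncard hsub P.finite_toSet).trans_eq (Set.ncard_coe_finset P)
  refine (log_natCast_le_log_natCast hcard).trans ?_
  have := log_card_filter_sparse_le (ι := Fin s) (Icc (-(n : ℤ)) n) (z := 0) (by simp) hm hθ
  rwa [card_Icc_neg_erase_zero, Fintype.card_fin, Nat.cast_mul, Nat.cast_ofNat] at this

/-- κ-EC-weak tractability (κ > 1) of L₂-approximation for Λ^all,
expressed via the eigenvalue-counting function N(ε,s) = #{h ∈ ℤ^s : ω_h > ε²}:
for every θ > 0 there is T > 0 such that log N(ε,s) ≤ θ(s + (log ε⁻¹)^κ)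
whenever s ≥ 1, ε ∈ (0,1) and s + log ε⁻¹ ≥ T. -/
theorem stmt8 (ω : ℝ) (hω : ω ∈ Set.Ioo (0:ℝ) 1) (κ : ℝ) (hκ : 1 < κ)
    (a b : ℕ → ℝ) (aStar bStar : ℝ) (haStar : 0 < aStar) (hbStar : 0 < bStar)
    (ha : ∀ j, aStar ≤ a j) (hb : ∀ j, bStar ≤ b j) :
    ∀ θ : ℝ, 0 < θ → ∃ T : ℝ, 0 < T ∧
      ∀ s : ℕ, 1 ≤ s → ∀ ε : ℝ, ε ∈ Set.Ioo (0:ℝ) 1 →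
        T ≤ (s : ℝ) + Real.log ε⁻¹ →
        Real.log
            (({h : Fin s → ℤ |
                ε ^ 2 < ω ^ (∑ j : Fin s, a j * |(h j : ℝ)| ^ (b j))}.ncard : ℝ)) ≤
          θ * ((s : ℝ) + (Real.log ε⁻¹) ^ κ) := by
  intro θ hθ
  have hc : 0 ≤ 2 / (aStar * log ω⁻¹) :=
    div_nonneg zero_le_two (mul_nonneg haStar.le (log_nonneg (one_le_inv₀ hω.1 |>.2 hω.2.le)))
  obtain ⟨T, hT0, hT⟩ := exists_le_mul_add_of_isLittleO
    (monotoneOn_sparseLogBound (half_pos hθ).le hc hbStar.le)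
    (sparseLogBound_isLittleO (half_pos hθ) hc hbStar hκ) (fun y hy => rpow_nonneg hy κ)
    (half_pos hθ)
  refine ⟨T, hT0, fun s _ ε hε hsT => ?_⟩
  have hL : 0 ≤ log ε⁻¹ := log_nonneg (one_le_inv₀ hε.1 |>.2 hε.2.le)
  have hLκ : 0 ≤ log ε⁻¹ ^ κ := rpow_nonneg hL κ
  calc log {h : Fin s → ℤ | ε ^ 2 < ω ^ (∑ j : Fin s, a j * |(h j : ℝ)| ^ (b j))}.ncard
      ≤ θ / 2 * s + sparseLogBound (θ / 2) (2 / (aStar * log ω⁻¹)) bStar (log ε⁻¹) :=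
        log_ncard_le_sparseLogBound hω hε.1 hε.2.le (half_pos hθ) haStar hbStar ha hb s
    _ ≤ θ / 2 * s + θ / 2 * (s + log ε⁻¹ ^ κ) := by
        gcongr
        exact hT _ _ s.cast_nonneg hL hsT
    _ ≤ θ * (s + log ε⁻¹ ^ κ) := by nlinarith
end

section
/- Let ω ∈ (0,1), let s ≥ 1, let a_1,…,a_s and b_1,…,b_s be positive reals, and let ε ∈ (0,1). Then every finite subset S ⊆ ℤ^s satisfying ∑_{h ∈ ℤ^s∖S} ω_h ≤ ε² · ∑_{h ∈ ℤ^s} ω_h has cardinality |S| ≥ (1−ε²) · ∏_{j=1}^s (1 + 2 ∑_{h=1}^∞ ω^{a_j h^{b_j}}) ≥ (1−ε²) · ∏_{j=1}^s (1 + 2 ω^{a_j}). -/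
open Real Filter Asymptotics

/-! The weights factor over the coordinates, `ω_h = ∏ j, ω ^ (a j * |h j| ^ b j)`, so their
total sum is the product of the one-dimensional sums
`∑_{m : ℤ} ω ^ (a * |m| ^ b) = 1 + 2 ∑_{n ≥ 1} ω ^ (a * n ^ b)`, each at least `1 + 2 ω ^ a`. As every `ω_h ≤ 1`, a set `S` whose complement carries at most an `ε²`
fraction of the total mass has `|S| ≥ ∑_{h ∈ S} ω_h ≥ (1 - ε²) ∑_h ω_h`. -/

/- `ω ^ (a * x ^ b) = exp (-(a * -log ω) * x ^ b)` decays faster than any power of `x ^ b`,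
in particular faster than `x ^ (-2)`. -/
lemma summable_rpow_mul_natCast_rpow {ω a b : ℝ} (hω₀ : 0 < ω) (hω₁ : ω < 1) (ha : 0 < a)
    (hb : 0 < b) : Summable fun n : ℕ ↦ ω ^ (a * (n : ℝ) ^ b) := by
  have hc : 0 < a * -log ω := mul_pos ha (neg_pos.2 (log_neg hω₀ hω₁))
  have hlittle : (fun x : ℝ ↦ ω ^ (a * x ^ b)) =o[atTop] fun x ↦ x ^ (-2 : ℝ) := by
    refine ((isLittleO_exp_neg_mul_rpow_atTop hc (-2 / b)).comp_tendsto
      (tendsto_rpow_atTop hb)).congr' ?_ ?_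
    · exact .of_forall fun x ↦ by
        simp only [Function.comp, rpow_def_of_pos hω₀]
        ring_nf
    · filter_upwards [eventually_ge_atTop 0] with x hx
      simp only [Function.comp, ← rpow_mul hx, mul_div_cancel₀ _ hb.ne']
  exact summable_of_isBigO_nat (summable_nat_rpow.2 (by norm_num))
    (hlittle.isBigO.comp_tendsto tendsto_natCast_atTop_atTop)

lemma HasSum.int_of_even {M : Type*} [AddCommMonoid M] [TopologicalSpace M] [ContinuousAdd M]
    {f : ℤ → M} (hf : ∀ m, f (-m) = f m) {t : M} (ht : HasSum (fun n : ℕ ↦ f (n + 1)) t) :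
    HasSum f (f 0 + t + t) := by
  have hneg : HasSum (fun n : ℕ ↦ f (-(n + 1))) t := by simpa only [hf] using ht
  simpa only [add_comm t] using ht.of_add_one_of_neg_add_one hneg

lemma summable_rpow_mul_natCast_add_one_rpow {ω a b : ℝ} (hω₀ : 0 < ω) (hω₁ : ω < 1)
    (ha : 0 < a) (hb : 0 < b) : Summable fun n : ℕ ↦ ω ^ (a * ((n : ℝ) + 1) ^ b) := by
  simpa only [Nat.cast_add, Nat.cast_one] using
    (summable_nat_add_iff 1).2 (summable_rpow_mul_natCast_rpow hω₀ hω₁ ha hb)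

lemma hasSum_int_rpow_mul_abs_rpow {ω a b : ℝ} (hω₀ : 0 < ω) (hω₁ : ω < 1) (ha : 0 < a)
    (hb : 0 < b) :
    HasSum (fun m : ℤ ↦ ω ^ (a * |(m : ℝ)| ^ b))
      (1 + 2 * ∑' n : ℕ, ω ^ (a * ((n : ℝ) + 1) ^ b)) := by
  have hpos : HasSum (fun n : ℕ ↦ ω ^ (a * |((n + 1 : ℤ) : ℝ)| ^ b))
      (∑' n : ℕ, ω ^ (a * ((n : ℝ) + 1) ^ b)) := by
    convert (summable_rpow_mul_natCast_add_one_rpow hω₀ hω₁ ha hb).hasSum using 4 with n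
    push_cast
    rw [abs_of_nonneg (by positivity)]
  convert HasSum.int_of_even (f := fun m : ℤ ↦ ω ^ (a * |(m : ℝ)| ^ b))
    (fun m ↦ by simp only [Int.cast_neg, abs_neg]) hpos using 1
  simp only [Int.cast_zero, abs_zero, zero_rpow hb.ne', mul_zero, rpow_zero]
  ring

lemma hasSum_fin_prod_apply {β : Type*} {n : ℕ} {f : Fin n → β → ℝ} {σ : Fin n → ℝ}
    (hf : ∀ j, HasSum (f j) (σ j)) (hf₀ : ∀ j b, 0 ≤ f j b) :
    HasSum (fun x : Fin n → β ↦ ∏ j, f j (x j)) (∏ j, σ j) := by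
  induction n with
  | zero => simp
  | succ n ih =>
    have htail := ih (fun j ↦ hf j.succ) (fun j ↦ hf₀ j.succ)
    have hsum : Summable fun p : β × (Fin n → β) ↦ f 0 p.1 * ∏ j : Fin n, f j.succ (p.2 j) :=
      Summable.mul_of_nonneg (f := f 0) (g := fun x : Fin n → β ↦ ∏ j : Fin n, f j.succ (x j))
        (hf 0).summable htail.summable (hf₀ 0) fun x ↦
          Finset.prod_nonneg fun j _ ↦ hf₀ j.succ (x j)
    have hpair := (hf 0).mul htail hsum
    rw [Fin.prod_univ_succ, ← (Fin.consEquiv fun _ ↦ β).hasSum_iff]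
    simpa only [Function.comp_def, Fin.consEquiv_apply, Fin.prod_univ_succ, Fin.cons_zero,
      Fin.cons_succ] using hpair

lemma one_sub_mul_le_card_of_tsum_compl_le {α : Type*} {f : α → ℝ} {T δ : ℝ} (hf : HasSum f T)
    (hf₁ : ∀ x, f x ≤ 1) (S : Finset α) (hS : ∑' x : {x // x ∉ S}, f x ≤ δ * T) :
    (1 - δ) * T ≤ S.card := by
  have hsplit := hf.summable.sum_add_tsum_subtype_compl S
  have hS_le : ∑ x ∈ S, f x ≤ S.card := by
    simpa using Finset.sum_le_sum fun x (_ : x ∈ S) ↦ hf₁ x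
  rw [hf.tsum_eq] at hsplit
  linarith

theorem stmt9_general (ω : ℝ) (hω : ω ∈ Set.Ioo (0:ℝ) 1) (s : ℕ)
    (a b : Fin s → ℝ) (ha : ∀ j, 0 < a j) (hb : ∀ j, 0 < b j)
    (ε : ℝ) (hε : ε ∈ Set.Ioo (0:ℝ) 1) (S : Finset (Fin s → ℤ))
    (hS : ∑' h : {h : Fin s → ℤ // h ∉ S}, ω ^ (∑ j, a j * |(h.1 j : ℝ)| ^ (b j)) ≤
      ε ^ 2 * ∑' h : Fin s → ℤ, ω ^ (∑ j, a j * |(h j : ℝ)| ^ (b j))) :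
    (1 - ε ^ 2) * ∏ j, (1 + 2 * ω ^ (a j)) ≤
        (1 - ε ^ 2) * ∏ j, (1 + 2 * ∑' h : ℕ, ω ^ (a j * ((h : ℝ) + 1) ^ (b j))) ∧
    (1 - ε ^ 2) * ∏ j, (1 + 2 * ∑' h : ℕ, ω ^ (a j * ((h : ℝ) + 1) ^ (b j))) ≤
        (S.card : ℝ) := by
  obtain ⟨hω₀, hω₁⟩ := hω
  have htotal : HasSum (fun h : Fin s → ℤ ↦ ω ^ (∑ j, a j * |(h j : ℝ)| ^ (b j)))
      (∏ j, (1 + 2 * ∑' n : ℕ, ω ^ (a j * ((n : ℝ) + 1) ^ (b j)))) := by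
    simpa only [rpow_sum_of_pos hω₀] using
      hasSum_fin_prod_apply (fun j ↦ hasSum_int_rpow_mul_abs_rpow hω₀ hω₁ (ha j) (hb j))
        fun j m ↦ rpow_nonneg hω₀.le _
  have hfirst : ∀ j, ω ^ a j ≤ ∑' n : ℕ, ω ^ (a j * ((n : ℝ) + 1) ^ (b j)) := fun j ↦ by
    simpa using (summable_rpow_mul_natCast_add_one_rpow hω₀ hω₁ (ha j) (hb j)).le_tsum 0
      fun n _ ↦ rpow_nonneg hω₀.le _
  refine ⟨?_, one_sub_mul_le_card_of_tsum_compl_le htotal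
    (fun h ↦ rpow_le_one hω₀.le hω₁.le <| Finset.sum_nonneg fun j _ ↦
      mul_nonneg (ha j).le (by positivity)) S (htotal.tsum_eq ▸ hS)⟩
  have hε2 : 0 ≤ 1 - ε ^ 2 := by nlinarith [hε.1, hε.2]
  gcongr with j
  exact hfirst j

/-- lower bound on the information complexity for the normalized error
criterion: any finite set S ⊆ ℤ^s with ∑_{h∉S} ω_h ≤ ε² ∑_{h∈ℤ^s} ω_h satisfies
|S| ≥ (1-ε²) ∏_{j=1}^s (1 + 2∑_{h=1}^∞ ω^{a_j h^{b_j}}) ≥ (1-ε²) ∏_{j=1}^s (1 + 2ω^{a_j}). -/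
theorem stmt9 (ω : ℝ) (hω : ω ∈ Set.Ioo (0:ℝ) 1) (s : ℕ) (hs : 1 ≤ s)
    (a b : Fin s → ℝ) (ha : ∀ j, 0 < a j) (hb : ∀ j, 0 < b j)
    (ε : ℝ) (hε : ε ∈ Set.Ioo (0:ℝ) 1) (S : Finset (Fin s → ℤ))
    (hS : ∑' h : {h : Fin s → ℤ // h ∉ S}, ω ^ (∑ j, a j * |(h.1 j : ℝ)| ^ (b j)) ≤
      ε ^ 2 * ∑' h : Fin s → ℤ, ω ^ (∑ j, a j * |(h j : ℝ)| ^ (b j))) :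
    (1 - ε ^ 2) * ∏ j, (1 + 2 * ω ^ (a j)) ≤
        (1 - ε ^ 2) * ∏ j, (1 + 2 * ∑' h : ℕ, ω ^ (a j * ((h : ℝ) + 1) ^ (b j))) ∧
    (1 - ε ^ 2) * ∏ j, (1 + 2 * ∑' h : ℕ, ω ^ (a j * ((h : ℝ) + 1) ^ (b j))) ≤
        (S.card : ℝ) :=
  stmt9_general ω hω s a b ha hb ε hε S hS
end

section
/- Let ω ∈ (0,1), let s ≥ 1, let a_1,…,a_s and b_1,…,b_s be positive reals, let m_1,…,m_s be positive integers, set V := {h ∈ ℤ^s : −m_j/2 < h_j ≤ m_j/2 for all j} and n := ∏_{j=1}^s m_j. Then ∑_{h ∈ ℤ^s ∖ V} ω_h ≤ n · (−1 + ∏_{j=1}^s (1 + 2 ∑_{h=1}^∞ (√ω)^{a_j 2^{−b_j} (m_j h)^{b_j}})). -/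
/-!
Tile `ℤ^s` by the translates `h = v + m ⊙ q` (`q ∈ ℤ^s`) of the cell `V`, which has `n = ∏ m_j`
points, each satisfying `|v_j| ≤ m_j / 2`. Then `|h_j| ≥ m_j |q_j| / 2`, so
`ω_h ≤ ∏_j √ω ^ (a_j 2^{-b_j} m_j^{b_j} |q_j|^{b_j})`, and `h ∉ V` exactly when `q ≠ 0`.
Summing over the `n` points of each translate with `q ≠ 0` bounds the sum by `n` times the
product of the one-dimensional series minus its `q = 0` term, which is `1`.
-/

open Filter Real

theorem summable_exp_neg_mul_rpow {c p : ℝ} (hc : 0 < c) (hp : 0 < p) :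
    Summable fun n : ℕ => exp (-c * (n : ℝ) ^ p) := by
  have hlim : Tendsto (fun n : ℕ => (n : ℝ) ^ p) atTop atTop :=
    (tendsto_rpow_atTop hp).comp tendsto_natCast_atTop_atTop
  have := ((isLittleO_exp_neg_mul_rpow_atTop hc (-2 / p)).comp_tendsto hlim).isBigO
  refine summable_of_isBigO_nat' (summable_nat_rpow.mpr (by norm_num : (-2 : ℝ) < -1))
    (this.congr_right fun n => ?_)
  rw [Function.comp_apply, ← rpow_mul (Nat.cast_nonneg _), mul_div_cancel₀ _ hp.ne']

section IntSeries

variable {r c p : ℝ}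

theorem summable_int_rpow_mul_abs_rpow (hr₀ : 0 < r) (hr₁ : r < 1) (hc : 0 < c) (hp : 0 < p) :
    Summable fun t : ℤ => r ^ (c * |(t : ℝ)| ^ p) := by
  have hnat : Summable fun n : ℕ => r ^ (c * (n : ℝ) ^ p) := by
    refine (summable_exp_neg_mul_rpow (mul_pos (neg_pos.mpr (log_neg hr₀ hr₁)) hc) hp).congr
      fun n => ?_
    rw [rpow_def_of_pos hr₀]
    ring_nf
  exact .of_nat_of_neg (by simpa using hnat) (by simpa using hnat)

theorem tsum_int_rpow_mul_abs_rpow (hr₀ : 0 < r) (hr₁ : r < 1) (hc : 0 < c) (hp : 0 < p) :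
    ∑' t : ℤ, r ^ (c * |(t : ℝ)| ^ p) = 1 + 2 * ∑' k : ℕ, r ^ (c * ((k : ℝ) + 1) ^ p) := by
  rw [tsum_int_eq_zero_add_two_mul_tsum_pnat (fun t => by simp)
      (summable_int_rpow_mul_abs_rpow hr₀ hr₁ hc hp),
    tsum_pnat_eq_tsum_succ (f := fun k : ℕ => r ^ (c * |((k : ℤ) : ℝ)| ^ p))]
  simp only [Int.cast_zero, abs_zero, zero_rpow hp.ne', mul_zero, rpow_zero, nsmul_eq_mul]
  norm_cast

end IntSeries

section PiProduct

variable {ι κ : Type*} [Fintype ι] {g : ι → κ → ℝ}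

theorem sum_prod_le_prod_tsum (hg : ∀ i k, 0 ≤ g i k) (hs : ∀ i, Summable (g i))
    (u : Finset (ι → κ)) :
    ∑ x ∈ u, ∏ i, g i (x i) ≤ ∏ i, ∑' k, g i k := by
  classical
  calc ∑ x ∈ u, ∏ i, g i (x i)
      ≤ ∑ x ∈ Fintype.piFinset fun i => u.image (· i), ∏ i, g i (x i) :=
        Finset.sum_le_sum_of_subset_of_nonneg
          (fun x hx => Fintype.mem_piFinset.mpr fun i => Finset.mem_image_of_mem _ hx)
          (fun _ _ _ => Finset.prod_nonneg fun i _ => hg i _)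
    _ = ∏ i, ∑ k ∈ u.image (· i), g i k := (Finset.prod_univ_sum _ _).symm
    _ ≤ ∏ i, ∑' k, g i k :=
        Finset.prod_le_prod (fun i _ => Finset.sum_nonneg fun k _ => hg i k)
          fun i _ => (hs i).sum_le_tsum _ fun k _ => hg i k

theorem summable_prod_apply (hg : ∀ i k, 0 ≤ g i k) (hs : ∀ i, Summable (g i)) :
    Summable fun x : ι → κ => ∏ i, g i (x i) :=
  summable_of_sum_le (fun _ => Finset.prod_nonneg fun i _ => hg i _)
    (sum_prod_le_prod_tsum hg hs)

theorem tsum_prod_apply_le (hg : ∀ i k, 0 ≤ g i k) (hs : ∀ i, Summable (g i)) :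
    ∑' x : ι → κ, ∏ i, g i (x i) ≤ ∏ i, ∑' k, g i k :=
  tsum_le_of_sum_le (fun _ => Finset.prod_nonneg fun i _ => hg i _)
    (sum_prod_le_prod_tsum hg hs)

end PiProduct

theorem summable_and_tsum_subtype_le_card_mul {α γ β : Type*} [Fintype β] (e : α ≃ γ × β)
    (S : Finset γ) {f : α → ℝ} {G : γ → ℝ} (hf : 0 ≤ f) (hG₀ : 0 ≤ G) (hG : Summable G)
    (hfG : ∀ a, f a ≤ G (e a).1) :
    Summable f ∧
      ∑' a : {a // (e a).1 ∉ S}, f a ≤ Fintype.card β * (∑' c, G c - ∑ c ∈ S, G c) := by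
  have hGe : Summable fun a => G (e a).1 :=
    ((hG.mul_of_nonneg (g := fun _ : β => (1 : ℝ)) .of_finite hG₀ fun _ => zero_le_one)
      |>.comp_injective e.injective).congr fun _ => mul_one _
  have hf' : Summable f := hGe.of_nonneg_of_le hf hfG
  refine ⟨hf', ?_⟩
  calc ∑' a : {a // (e a).1 ∉ S}, f a
      ≤ ∑' a : {a // (e a).1 ∉ S}, G (e a).1 :=
        (hf'.subtype _).tsum_le_tsum (fun a => hfG a) (hGe.subtype _)
    _ = ∑' p : {p : γ × β // p.1 ∉ S}, G p.1.1 :=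
        (e.subtypeEquiv (q := fun p : γ × β => p.1 ∉ S) fun _ => Iff.rfl).tsum_eq
          (fun p => G p.1.1)
    _ = ∑' p : {c // c ∉ S} × β, G p.1 * 1 := by
        simp only [mul_one]
        exact ((Equiv.prodSubtypeFstEquivSubtypeProd (p := (· ∉ S)) (β := β)).symm.tsum_eq
          fun p => G p.1.1).symm
    _ = (∑' c : {c // c ∉ S}, G c) * ∑' _ : β, 1 :=
        ((hG.subtype _).tsum_mul_tsum .of_finite
          ((hG.subtype _).mul_of_nonneg .of_finite (fun _ => hG₀ _) fun _ => zero_le_one)).symm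
    _ = Fintype.card β * (∑' c, G c - ∑ c ∈ S, G c) := by
        rw [← hG.sum_add_tsum_subtype_compl S, tsum_fintype (fun _ : β => (1 : ℝ)),
          Finset.sum_const, Finset.card_univ, nsmul_one]
        ring

theorem Int.ediv_eq_zero_iff_of_pos {a b : ℤ} (hb : 0 < b) : a / b = 0 ↔ 0 ≤ a ∧ a < b := by
  refine ⟨fun h => ?_, fun h => Int.ediv_eq_zero_of_lt h.1 h.2⟩
  have := Int.emod_add_mul_ediv a b
  rw [h, mul_zero, add_zero] at this
  exact this ▸ ⟨Int.emod_nonneg a hb.ne', Int.emod_lt_of_pos a hb⟩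

theorem Int.mul_abs_le_two_mul_abs_mul_add {M q v : ℤ} (hv : 2 * |v| ≤ M) :
    M * |q| ≤ 2 * |M * q + v| := by
  rcases eq_or_ne q 0 with rfl | hq
  · simp
  · have hq₁ : 1 ≤ |q| := Int.one_le_abs hq
    have hM : 0 ≤ M := by linarith [abs_nonneg v]
    have htri : |M * q| ≤ |M * q + v| + |v| := by simpa using abs_sub (M * q + v) v
    rw [abs_mul, abs_of_nonneg hM] at htri
    nlinarith

/-- Coordinatewise `t ↦ (q, r)` with `t = q * m + r - (m - 1) / 2` and `0 ≤ r < m`;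
`-((m - 1) / 2)` is the least integer above `-m / 2`. -/
def centeredGridEquiv {ι : Type*} (m : ι → ℕ) [∀ i, NeZero (m i)] :
    (ι → ℤ) ≃ (ι → ℤ) × ((i : ι) → Fin (m i)) :=
  (Equiv.piCongrRight fun i =>
    (Equiv.addRight (((m i : ℤ) - 1) / 2)).trans (Int.divModEquiv (m i))).trans
    (Equiv.arrowProdEquivProdArrow _ _ _)

section CenteredGrid

variable {ι : Type*} {m : ι → ℕ} [∀ i, NeZero (m i)]

theorem centeredGridEquiv_fst_apply (h : ι → ℤ) (i : ι) :
    (centeredGridEquiv m h).1 i = (h i + ((m i : ℤ) - 1) / 2) / m i := rfl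

theorem centeredGridEquiv_fst_eq_zero_iff (h : ι → ℤ) :
    (centeredGridEquiv m h).1 = 0 ↔ ∀ i, -((m i : ℝ) / 2) < h i ∧ (h i : ℝ) ≤ m i / 2 := by
  refine funext_iff.trans (forall_congr' fun i => ?_)
  have hm : (0 : ℤ) < m i := by exact_mod_cast Nat.pos_of_ne_zero (NeZero.ne (m i))
  rw [Pi.zero_apply, centeredGridEquiv_fst_apply, Int.ediv_eq_zero_iff_of_pos hm]
  have hlt : -((m i : ℝ) / 2) < h i ↔ -(m i : ℤ) < 2 * h i := by
    rw [← Int.cast_lt (R := ℝ)]; push_cast; constructor <;> intro hx <;> linarith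
  have hle : (h i : ℝ) ≤ m i / 2 ↔ 2 * h i ≤ (m i : ℤ) := by
    rw [← Int.cast_le (R := ℝ)]; push_cast; constructor <;> intro hx <;> linarith
  rw [hlt, hle]
  omega

theorem mul_abs_centeredGridEquiv_fst_le (h : ι → ℤ) (i : ι) :
    (m i : ℝ) * |((centeredGridEquiv m h).1 i : ℝ)| ≤ 2 * |(h i : ℝ)| := by
  rw [centeredGridEquiv_fst_apply]
  set q := (h i + ((m i : ℤ) - 1) / 2) / m i
  have hm : (0 : ℤ) < m i := by exact_mod_cast Nat.pos_of_ne_zero (NeZero.ne (m i))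
  have hdiv := Int.emod_add_mul_ediv (h i + ((m i : ℤ) - 1) / 2) (m i)
  have hr₀ := Int.emod_nonneg (h i + ((m i : ℤ) - 1) / 2) hm.ne'
  have hr₁ := Int.emod_lt_of_pos (h i + ((m i : ℤ) - 1) / 2) hm
  have hv : 2 * |h i - m i * q| ≤ m i := by
    have h₁ : 2 * (((m i : ℤ) - 1) / 2) ≤ m i - 1 := by omega
    have h₂ : m i - 2 ≤ 2 * (((m i : ℤ) - 1) / 2) := by omega
    rcases abs_cases (h i - m i * q) with ⟨habs, -⟩ | ⟨habs, -⟩ <;> rw [habs] <;> linarith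
  have := Int.mul_abs_le_two_mul_abs_mul_add (q := q) hv
  rw [add_sub_cancel] at this
  exact_mod_cast this

end CenteredGrid

theorem rpow_mul_abs_rpow_le_sqrt_rpow {ω a b m t q : ℝ} (hω₀ : 0 < ω) (hω₁ : ω ≤ 1)
    (ha : 0 ≤ a) (hb : 0 ≤ b) (hm : 0 ≤ m) (htq : m * |q| ≤ 2 * |t|) :
    ω ^ (a * |t| ^ b) ≤ √ω ^ (a * 2 ^ (-b) * m ^ b * |q| ^ b) := by
  have hexp : a * 2 ^ (-b) * m ^ b * |q| ^ b ≤ a * |t| ^ b :=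
    calc a * 2 ^ (-b) * m ^ b * |q| ^ b = a * (m * |q| / 2) ^ b := by
          rw [div_rpow (by positivity) zero_le_two, mul_rpow hm (abs_nonneg q),
            rpow_neg zero_le_two]
          ring
      _ ≤ a * |t| ^ b := by gcongr; linarith
  calc ω ^ (a * |t| ^ b) ≤ √ω ^ (a * |t| ^ b) :=
        rpow_le_rpow hω₀.le (le_sqrt_of_sq_le (by nlinarith)) (by positivity)
    _ ≤ √ω ^ (a * 2 ^ (-b) * m ^ b * |q| ^ b) :=
        rpow_le_rpow_of_exponent_ge (sqrt_pos.mpr hω₀) (sqrt_le_one.mpr hω₁) hexp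

theorem rpow_sum_le_prod_sqrt_rpow {ι : Type*} [Fintype ι] {ω : ℝ} (hω₀ : 0 < ω)
    (hω₁ : ω ≤ 1) {a b m t q : ι → ℝ} (ha : ∀ i, 0 ≤ a i) (hb : ∀ i, 0 ≤ b i)
    (hm : ∀ i, 0 ≤ m i) (htq : ∀ i, m i * |q i| ≤ 2 * |t i|) :
    ω ^ (∑ i, a i * |t i| ^ b i) ≤ ∏ i, √ω ^ (a i * 2 ^ (-b i) * m i ^ b i * |q i| ^ b i) := by
  rw [rpow_sum_of_pos hω₀]
  exact Finset.prod_le_prod (fun i _ => rpow_nonneg hω₀.le _) fun i _ =>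
    rpow_mul_abs_rpow_le_sqrt_rpow hω₀ hω₁ (ha i) (hb i) (hm i) (htq i)

theorem summable_and_tsum_compl_centeredCell_le {ι : Type*} [Fintype ι] (m : ι → ℕ)
    [∀ i, NeZero (m i)] {f : (ι → ℤ) → ℝ} {G : ι → ℤ → ℝ} (hf : 0 ≤ f)
    (hG₀ : ∀ i t, 0 ≤ G i t) (hG : ∀ i, Summable (G i)) (hG0 : ∀ i, G i 0 = 1)
    (hfG : ∀ h, f h ≤ ∏ i, G i ((centeredGridEquiv m h).1 i)) :
    Summable f ∧
      ∑' h : {h : ι → ℤ // ¬ ∀ i, -((m i : ℝ) / 2) < h i ∧ (h i : ℝ) ≤ m i / 2}, f h ≤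
        ((∏ i, m i : ℕ) : ℝ) * (-1 + ∏ i, ∑' t, G i t) := by
  classical
  obtain ⟨hsum, hle⟩ := summable_and_tsum_subtype_le_card_mul (centeredGridEquiv m) {0} hf
    (fun k => Finset.prod_nonneg fun i _ => hG₀ i _) (summable_prod_apply hG₀ hG) hfG
  have hcompl : ∀ h : ι → ℤ, (¬ ∀ i, -((m i : ℝ) / 2) < h i ∧ (h i : ℝ) ≤ m i / 2) ↔
      (centeredGridEquiv m h).1 ∉ ({0} : Finset (ι → ℤ)) := fun h => by
    rw [Finset.mem_singleton, centeredGridEquiv_fst_eq_zero_iff]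
  refine ⟨hsum, ?_⟩
  calc _ = ∑' h : {h // (centeredGridEquiv m h).1 ∉ ({0} : Finset (ι → ℤ))}, f h :=
        (Equiv.subtypeEquivRight hcompl).tsum_eq fun h => f h
    _ ≤ _ := hle
    _ = (∏ i, m i : ℕ) * (∑' k : ι → ℤ, ∏ i, G i (k i) - 1) := by simp [hG0]
    _ ≤ (∏ i, m i : ℕ) * (∏ i, ∑' t, G i t - 1) := by
        gcongr
        exact tsum_prod_apply_le hG₀ hG
    _ = _ := by ring

theorem stmt13_general (ω : ℝ) (hω : ω ∈ Set.Ioo (0:ℝ) 1) (s : ℕ)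
    (a b : Fin s → ℝ) (ha : ∀ j, 0 < a j) (hb : ∀ j, 0 < b j)
    (m : Fin s → ℕ) (hm : ∀ j, 0 < m j) :
    Summable (fun h : {h : Fin s → ℤ //
        ¬ ∀ j, -((m j : ℝ) / 2) < (h j : ℝ) ∧ (h j : ℝ) ≤ (m j : ℝ) / 2} =>
      ω ^ (∑ j, a j * |(h.1 j : ℝ)| ^ (b j))) ∧
    ∑' h : {h : Fin s → ℤ //
        ¬ ∀ j, -((m j : ℝ) / 2) < (h j : ℝ) ∧ (h j : ℝ) ≤ (m j : ℝ) / 2},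
        ω ^ (∑ j, a j * |(h.1 j : ℝ)| ^ (b j)) ≤
      ((∏ j, m j : ℕ) : ℝ) * (-1 + ∏ j, (1 + 2 * ∑' k : ℕ,
        Real.sqrt ω ^ (a j * (2:ℝ) ^ (-(b j)) * ((m j : ℝ) * ((k : ℝ) + 1)) ^ (b j)))) := by
  obtain ⟨hω₀, hω₁⟩ := hω
  have : ∀ j, NeZero (m j) := fun j => ⟨(hm j).ne'⟩
  have hr₀ : 0 < √ω := sqrt_pos.mpr hω₀
  have hr₁ : √ω < 1 := (sqrt_lt' one_pos).mpr (by rwa [one_pow])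
  have hC : ∀ j, 0 < a j * 2 ^ (-b j) * (m j : ℝ) ^ b j := fun j =>
    mul_pos (mul_pos (ha j) (rpow_pos_of_pos two_pos _)) (rpow_pos_of_pos (by simpa using hm j) _)
  obtain ⟨hsum, hle⟩ := summable_and_tsum_compl_centeredCell_le m
    (G := fun j t => √ω ^ (a j * 2 ^ (-b j) * (m j : ℝ) ^ b j * |(t : ℝ)| ^ b j))
    (fun h => rpow_nonneg hω₀.le _) (fun j t => by positivity)
    (fun j => summable_int_rpow_mul_abs_rpow hr₀ hr₁ (hC j) (hb j))
    (fun j => by simp [zero_rpow (hb j).ne'])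
    fun h => rpow_sum_le_prod_sqrt_rpow (t := fun j => (h j : ℝ))
      (q := fun j => ((centeredGridEquiv m h).1 j : ℝ)) hω₀ hω₁.le (fun j => (ha j).le)
      (fun j => (hb j).le) (fun j => Nat.cast_nonneg _) (mul_abs_centeredGridEquiv_fst_le h)
  refine ⟨hsum.subtype _, hle.trans_eq ?_⟩
  congr 2
  refine Finset.prod_congr rfl fun j _ => ?_
  rw [tsum_int_rpow_mul_abs_rpow hr₀ hr₁ (hC j) (hb j)]
  congr! 4 with k
  rw [mul_rpow (Nat.cast_nonneg _) (by positivity), mul_assoc]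

/-- for the grid fundamental domain
V = {h ∈ ℤ^s : -m_j/2 < h_j ≤ m_j/2 for all j} and n = ∏_j m_j, one has
∑_{h ∈ ℤ^s ∖ V} ω_h ≤ n (-1 + ∏_{j=1}^s (1 + 2∑_{h=1}^∞ (√ω)^{a_j 2^{-b_j}(m_j h)^{b_j}})). -/
theorem stmt13 (ω : ℝ) (hω : ω ∈ Set.Ioo (0:ℝ) 1) (s : ℕ) (hs : 1 ≤ s)
    (a b : Fin s → ℝ) (ha : ∀ j, 0 < a j) (hb : ∀ j, 0 < b j)
    (m : Fin s → ℕ) (hm : ∀ j, 0 < m j) :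
    Summable (fun h : {h : Fin s → ℤ //
        ¬ ∀ j, -((m j : ℝ) / 2) < (h j : ℝ) ∧ (h j : ℝ) ≤ (m j : ℝ) / 2} =>
      ω ^ (∑ j, a j * |(h.1 j : ℝ)| ^ (b j))) ∧
    ∑' h : {h : Fin s → ℤ //
        ¬ ∀ j, -((m j : ℝ) / 2) < (h j : ℝ) ∧ (h j : ℝ) ≤ (m j : ℝ) / 2},
        ω ^ (∑ j, a j * |(h.1 j : ℝ)| ^ (b j)) ≤
      ((∏ j, m j : ℕ) : ℝ) * (-1 + ∏ j, (1 + 2 * ∑' k : ℕ,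
        Real.sqrt ω ^ (a j * (2:ℝ) ^ (-(b j)) * ((m j : ℝ) * ((k : ℝ) + 1)) ^ (b j)))) :=
  stmt13_general ω hω s a b ha hb m hm
end

section
/- Let ω ∈ (0,1), let a ≥ a_* > 0 and b ≥ b_* > 0 be reals, let m be an odd positive integer, and let v ∈ ℤ with 2|v| ≤ m − 1. Then ∑_{h ∈ ℤ∖{0}} ω^{a |v + m h|^{b}} ≤ 2 D · ω^{a ((m+1)/2)^{b}}, where D := ∑_{h=1}^∞ ω^{a_*(h^{b_*}−1)} (a convergent series). -/
open Real Filter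

private lemma aux_gsum (ω aStar bStar : ℝ) (hω0 : 0 < ω) (hω1 : ω < 1)
    (haStar : 0 < aStar) (hbStar : 0 < bStar) :
    Summable (fun n : ℕ => ω ^ (aStar * (((n : ℝ) + 1) ^ bStar - 1))) := by
  have hc : 0 < aStar * (-Real.log ω) :=
    mul_pos haStar (neg_pos.mpr (Real.log_neg hω0 hω1))
  have hrw : ∀ n : ℕ, ω ^ (aStar * (((n : ℝ) + 1) ^ bStar - 1)) =
      Real.exp (aStar * (-Real.log ω)) *
        Real.exp (-(aStar * (-Real.log ω)) * ((n : ℝ) + 1) ^ bStar) := by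
    intro n
    rw [Real.rpow_def_of_pos hω0, ← Real.exp_add]
    congr 1
    ring
  have Tx : Tendsto (fun n : ℕ => ((n : ℝ) + 1) ^ bStar) atTop atTop := by
    apply (tendsto_rpow_atTop hbStar).comp
    exact tendsto_atTop_add_const_right atTop 1 tendsto_natCast_atTop_atTop
  have T1 := (tendsto_rpow_mul_exp_neg_mul_atTop_nhds_zero (2 / bStar)
    (aStar * (-Real.log ω)) hc).comp Tx
  have T2 : Tendsto (fun n : ℕ => ((n : ℝ) + 1) ^ (2 : ℝ) *
      Real.exp (-(aStar * (-Real.log ω)) * ((n : ℝ) + 1) ^ bStar)) atTop (nhds 0) := by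
    apply T1.congr
    intro n
    simp only [Function.comp_apply]
    rw [← Real.rpow_mul (by positivity : (0:ℝ) ≤ (n : ℝ) + 1)]
    have hbb : bStar * (2 / bStar) = 2 := by field_simp
    rw [hbb]
  have T3 : Tendsto (fun n : ℕ => ω ^ (aStar * (((n : ℝ) + 1) ^ bStar - 1)) *
      ((n : ℝ) + 1) ^ (2 : ℝ)) atTop (nhds 0) := by
    have := T2.const_mul (Real.exp (aStar * (-Real.log ω)))
    rw [mul_zero] at this
    apply this.congr
    intro n
    rw [hrw n]
    ring
  have hev : ∀ᶠ n : ℕ in atTop, ‖ω ^ (aStar * (((n : ℝ) + 1) ^ bStar - 1))‖ ≤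
      1 * ‖((n : ℝ) + 1) ^ (-2 : ℝ)‖ := by
    filter_upwards [T3.eventually_lt_const one_pos] with n hn
    have hp1 : (0 : ℝ) < (n : ℝ) + 1 := by positivity
    have key : ω ^ (aStar * (((n : ℝ) + 1) ^ bStar - 1)) ≤ ((n : ℝ) + 1) ^ (-2 : ℝ) := by
      have h2 : ((n : ℝ) + 1) ^ (2 : ℝ) * ((n : ℝ) + 1) ^ (-2 : ℝ) = 1 := by
        rw [← Real.rpow_add hp1]
        norm_num
      have hx : ω ^ (aStar * (((n : ℝ) + 1) ^ bStar - 1)) =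
          (ω ^ (aStar * (((n : ℝ) + 1) ^ bStar - 1)) * ((n : ℝ) + 1) ^ (2 : ℝ)) *
            ((n : ℝ) + 1) ^ (-2 : ℝ) := by
        rw [mul_assoc, h2, mul_one]
      rw [hx]
      have hle : ω ^ (aStar * (((n : ℝ) + 1) ^ bStar - 1)) * ((n : ℝ) + 1) ^ (2 : ℝ) ≤ 1 :=
        hn.le
      calc ω ^ (aStar * (((n : ℝ) + 1) ^ bStar - 1)) * ((n : ℝ) + 1) ^ (2 : ℝ) *
            ((n : ℝ) + 1) ^ (-2 : ℝ)
          ≤ 1 * ((n : ℝ) + 1) ^ (-2 : ℝ) :=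
            mul_le_mul_of_nonneg_right hle (Real.rpow_pos_of_pos hp1 _).le
        _ = ((n : ℝ) + 1) ^ (-2 : ℝ) := one_mul _
    rw [Real.norm_of_nonneg (Real.rpow_pos_of_pos hω0 _).le,
      Real.norm_of_nonneg (Real.rpow_pos_of_pos hp1 _).le, one_mul]
    exact key
  have refsum : Summable (fun n : ℕ => ((n : ℝ) + 1) ^ (-2 : ℝ)) := by
    have h := Real.summable_nat_rpow.mpr (by norm_num : (-2 : ℝ) < -1)
    have h2 := (summable_nat_add_iff 1).mpr h
    apply h2.congr
    intro n
    push_cast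
    ring_nf
  exact summable_of_isBigO_nat refsum (Asymptotics.IsBigO.of_bound 1 hev)

private lemma aux_key (ω a b aStar bStar : ℝ) (hω0 : 0 < ω) (hω1 : ω < 1)
    (haStar : 0 < aStar) (ha : aStar ≤ a) (hbStar : 0 < bStar) (hb : bStar ≤ b)
    (m : ℕ) (hm : 0 < m) (v : ℤ) (hv : 2 * |v| ≤ (m : ℤ) - 1)
    (h : ℤ) (hh : h ≠ 0) :
    ω ^ (a * |((v + (m : ℤ) * h : ℤ) : ℝ)| ^ b) ≤
      ω ^ (a * (((m : ℝ) + 1) / 2) ^ b) * ω ^ (aStar * (|(h : ℝ)| ^ bStar - 1)) := by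
  have h1 : (1 : ℤ) ≤ |h| := Int.one_le_abs hh
  have hmz : (1 : ℤ) ≤ (m : ℤ) := by exact_mod_cast hm
  have e : |(m : ℤ) * h| = (m : ℤ) * |h| := by
    rw [abs_mul, abs_of_nonneg (by linarith : (0 : ℤ) ≤ (m : ℤ))]
  have tri : (m : ℤ) * |h| ≤ |v + (m : ℤ) * h| + |v| := by
    have e2 : (m : ℤ) * h = (v + (m : ℤ) * h) + (-v) := by ring
    calc (m : ℤ) * |h| = |(v + (m : ℤ) * h) + (-v)| := by rw [← e2, e]
      _ ≤ |v + (m : ℤ) * h| + |(-v)| := abs_add_le _ _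
      _ = |v + (m : ℤ) * h| + |v| := by rw [abs_neg]
  have hint : ((m : ℤ) + 1) * |h| ≤ 2 * |v + (m : ℤ) * h| := by
    nlinarith [mul_nonneg (by linarith : (0 : ℤ) ≤ (m : ℤ) - 1)
      (by linarith : (0 : ℤ) ≤ |h| - 1)]
  have hreal : (((m : ℝ) + 1) / 2) * |(h : ℝ)| ≤ |((v + (m : ℤ) * h : ℤ) : ℝ)| := by
    have hcast : ((m : ℝ) + 1) * |(h : ℝ)| ≤ 2 * |((v + (m : ℤ) * h : ℤ) : ℝ)| := by
      exact_mod_cast hint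
    linarith
  have hb0 : (0 : ℝ) < b := lt_of_lt_of_le hbStar hb
  have ha0 : (0 : ℝ) < a := lt_of_lt_of_le haStar ha
  have habs1 : (1 : ℝ) ≤ |(h : ℝ)| := by exact_mod_cast h1
  have hm1 : (1 : ℝ) ≤ (m : ℝ) := by exact_mod_cast hm
  have hM1 : (1 : ℝ) ≤ ((m : ℝ) + 1) / 2 := by linarith
  set M : ℝ := ((m : ℝ) + 1) / 2 with hMdef
  have hexp : a * M ^ b + aStar * (|(h : ℝ)| ^ bStar - 1) ≤
      a * |((v + (m : ℤ) * h : ℤ) : ℝ)| ^ b := by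
    have p1 : (M * |(h : ℝ)|) ^ b ≤ |((v + (m : ℤ) * h : ℤ) : ℝ)| ^ b :=
      Real.rpow_le_rpow (by positivity) hreal hb0.le
    have p2 : (M * |(h : ℝ)|) ^ b = M ^ b * |(h : ℝ)| ^ b :=
      Real.mul_rpow (by linarith) (abs_nonneg _)
    have p3 : |(h : ℝ)| ^ bStar ≤ |(h : ℝ)| ^ b :=
      Real.rpow_le_rpow_of_exponent_le habs1 hb
    have p4 : (1 : ℝ) ≤ |(h : ℝ)| ^ bStar := Real.one_le_rpow habs1 hbStar.le
    have p5 : (1 : ℝ) ≤ M ^ b := Real.one_le_rpow hM1 hb0.le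
    have p6 : aStar * (|(h : ℝ)| ^ bStar - 1) ≤ (a * M ^ b) * (|(h : ℝ)| ^ b - 1) := by
      apply mul_le_mul (by nlinarith) (by linarith) (by linarith) (by nlinarith)
    nlinarith [p1, p2]
  calc ω ^ (a * |((v + (m : ℤ) * h : ℤ) : ℝ)| ^ b)
      ≤ ω ^ (a * M ^ b + aStar * (|(h : ℝ)| ^ bStar - 1)) :=
        Real.rpow_le_rpow_of_exponent_ge hω0 hω1.le hexp
    _ = ω ^ (a * M ^ b) * ω ^ (aStar * (|(h : ℝ)| ^ bStar - 1)) :=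
        Real.rpow_add hω0 _ _

/-- one-coordinate aliasing estimate: for odd m ≥ 1 and v ∈ ℤ with
2|v| ≤ m - 1, the series D = ∑_{h=1}^∞ ω^{a_*(h^{b_*}-1)} converges and
∑_{h ∈ ℤ∖{0}} ω^{a|v+mh|^b} ≤ 2 D ω^{a((m+1)/2)^b}. -/
theorem stmt15 (ω a b aStar bStar : ℝ) (hω : ω ∈ Set.Ioo (0:ℝ) 1)
    (haStar : 0 < aStar) (ha : aStar ≤ a) (hbStar : 0 < bStar) (hb : bStar ≤ b)
    (m : ℕ) (hm : 0 < m) (hmodd : Odd m) (v : ℤ) (hv : 2 * |v| ≤ (m : ℤ) - 1) :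
    Summable (fun h : ℕ => ω ^ (aStar * (((h : ℝ) + 1) ^ bStar - 1))) ∧
    Summable (fun h : {h : ℤ // h ≠ 0} =>
      ω ^ (a * |((v + (m : ℤ) * h.1 : ℤ) : ℝ)| ^ b)) ∧
    ∑' h : {h : ℤ // h ≠ 0}, ω ^ (a * |((v + (m : ℤ) * h.1 : ℤ) : ℝ)| ^ b) ≤
      2 * (∑' h : ℕ, ω ^ (aStar * (((h : ℝ) + 1) ^ bStar - 1))) *
        ω ^ (a * (((m : ℝ) + 1) / 2) ^ b) := by
  obtain ⟨hω0, hω1⟩ := hω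
  have hgsum := aux_gsum ω aStar bStar hω0 hω1 haStar hbStar
  set g : ℕ → ℝ := fun n : ℕ => ω ^ (aStar * (((n : ℝ) + 1) ^ bStar - 1)) with hgdef
  set C : ℝ := ω ^ (a * (((m : ℝ) + 1) / 2) ^ b) with hCdef
  have hC0 : 0 ≤ C := (Real.rpow_pos_of_pos hω0 _).le
  set F : ℤ → ℝ := fun h : ℤ => ω ^ (a * |((v + (m : ℤ) * h : ℤ) : ℝ)| ^ b) with hFdef
  set s : Set ℤ := {h : ℤ | h ≠ 0} with hsdef
  have hF0 : ∀ k : ℤ, 0 ≤ F k := fun k => (Real.rpow_pos_of_pos hω0 _).le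
  have hI0 : ∀ k : ℤ, 0 ≤ s.indicator F k := fun k =>
    Set.indicator_nonneg (fun x _ => hF0 x) k
  -- bounds on the positive side
  have hbdd_pos : ∀ n : ℕ, s.indicator F ((n : ℤ) + 1) ≤ C * g n := by
    intro n
    have hne : ((n : ℤ) + 1) ≠ 0 := by omega
    rw [Set.indicator_of_mem (by simpa [hsdef] using hne)]
    have := aux_key ω a b aStar bStar hω0 hω1 haStar ha hbStar hb m hm v hv
      ((n : ℤ) + 1) hne
    have habs : |(((n : ℤ) + 1 : ℤ) : ℝ)| = (n : ℝ) + 1 := by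
      rw [abs_of_nonneg (by push_cast; positivity)]
      push_cast
      ring
    rw [habs] at this
    exact this
  have hbdd_neg : ∀ n : ℕ, s.indicator F (-((n : ℤ) + 1)) ≤ C * g n := by
    intro n
    have hne : (-((n : ℤ) + 1)) ≠ 0 := by omega
    rw [Set.indicator_of_mem (by simpa [hsdef] using hne)]
    have := aux_key ω a b aStar bStar hω0 hω1 haStar ha hbStar hb m hm v hv
      (-((n : ℤ) + 1)) hne
    have habs : |((-((n : ℤ) + 1) : ℤ) : ℝ)| = (n : ℝ) + 1 := by
      push_cast
      rw [abs_neg, abs_of_nonneg (by positivity)]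
    rw [habs] at this
    exact this
  -- summability of the two nat-indexed halves
  have hsum_shift : Summable (fun n : ℕ => s.indicator F ((n : ℤ) + 1)) :=
    Summable.of_nonneg_of_le (fun n => hI0 _) hbdd_pos (hgsum.mul_left C)
  have hsum_pos : Summable (fun n : ℕ => s.indicator F (n : ℤ)) := by
    apply (summable_nat_add_iff 1).mp
    apply hsum_shift.congr
    intro n
    push_cast
    ring_nf
  have hsum_neg : Summable (fun n : ℕ => s.indicator F (-((n : ℤ) + 1))) :=
    Summable.of_nonneg_of_le (fun n => hI0 _) hbdd_neg (hgsum.mul_left C)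
  have hIsum : Summable (s.indicator F) :=
    Summable.of_nat_of_neg_add_one hsum_pos hsum_neg
  have hFsub : Summable (fun h : {h : ℤ // h ≠ 0} => F h.1) :=
    summable_subtype_iff_indicator.mpr hIsum
  refine ⟨hgsum, hFsub, ?_⟩
  -- the tsum estimate
  have e0 : ∑' h : {h : ℤ // h ≠ 0}, F h.1 = ∑' k : ℤ, s.indicator F k :=
    tsum_subtype s F
  have e1 : ∑' k : ℤ, s.indicator F k =
      (∑' n : ℕ, s.indicator F (n : ℤ)) + ∑' n : ℕ, s.indicator F (-((n : ℤ) + 1)) :=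
    tsum_of_nat_of_neg_add_one hsum_pos hsum_neg
  have e2 : ∑' n : ℕ, s.indicator F (n : ℤ) = ∑' n : ℕ, s.indicator F ((n : ℤ) + 1) := by
    rw [Summable.tsum_eq_zero_add hsum_pos]
    have hz : s.indicator F ((0 : ℕ) : ℤ) = 0 := by
      apply Set.indicator_of_notMem
      simp [hsdef]
    rw [hz, zero_add]
    apply tsum_congr
    intro n
    push_cast
    ring_nf
  have hD : ∑' n : ℕ, C * g n = C * ∑' n : ℕ, g n := tsum_mul_left
  have b1 : ∑' n : ℕ, s.indicator F ((n : ℤ) + 1) ≤ C * ∑' n : ℕ, g n := by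
    rw [← hD]
    exact Summable.tsum_le_tsum hbdd_pos hsum_shift (hgsum.mul_left C)
  have b2 : ∑' n : ℕ, s.indicator F (-((n : ℤ) + 1)) ≤ C * ∑' n : ℕ, g n := by
    rw [← hD]
    exact Summable.tsum_le_tsum hbdd_neg hsum_neg (hgsum.mul_left C)
  calc ∑' h : {h : ℤ // h ≠ 0}, F h.1
      = (∑' n : ℕ, s.indicator F ((n : ℤ) + 1)) +
        ∑' n : ℕ, s.indicator F (-((n : ℤ) + 1)) := by rw [e0, e1, e2]
    _ ≤ C * ∑' n : ℕ, g n + C * ∑' n : ℕ, g n := add_le_add b1 b2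
    _ = 2 * (∑' n : ℕ, g n) * C := by ring
end

section
/- Let ε ∈ (0,1) with ε² ≤ 1/2, let β ∈ (0,1) and δ > 0, let (a_j)_{j≥1} be reals with a_j ≥ a_* > 0 for all j, and let j₀ ≥ 1 be a natural number such that a_j ≥ exp(δ j) for all j ≥ j₀. Then the series ∑_{j=j₀}^∞ (1/2)^{exp((1−β)δ j) − 1} converges and ∑_{j=1}^∞ ε^{2 a_j^{1−β}} ≤ ε^{2 min(a_*^{1−β}, 1)} · ( (j₀ − 1) + ∑_{j=j₀}^∞ (1/2)^{exp((1−β)δ j) − 1} ). -/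
/-- if ε² ≤ 1/2, β ∈ (0,1), δ > 0, a_j ≥ a_* > 0 for all j ≥ 1 and
a_j ≥ exp(δ j) for j ≥ j₀, then ∑_{j=j₀}^∞ (1/2)^{exp((1-β)δ j)-1} converges and
∑_{j=1}^∞ ε^{2 a_j^{1-β}} ≤ ε^{2 min(a_*^{1-β},1)} ((j₀-1) + ∑_{j=j₀}^∞ (1/2)^{exp((1-β)δ j)-1}). -/
theorem stmt19 (ε β δ aStar : ℝ) (hε : ε ∈ Set.Ioo (0:ℝ) 1) (hε2 : ε ^ 2 ≤ 1 / 2)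
    (hβ : β ∈ Set.Ioo (0:ℝ) 1) (hδ : 0 < δ) (a : ℕ → ℝ) (haStar : 0 < aStar)
    (ha : ∀ j, 1 ≤ j → aStar ≤ a j) (j₀ : ℕ) (hj₀ : 1 ≤ j₀)
    (hgrow : ∀ j, j₀ ≤ j → Real.exp (δ * j) ≤ a j) :
    Summable (fun j : ℕ =>
      ((1 : ℝ) / 2) ^ (Real.exp ((1 - β) * δ * ((j : ℝ) + (j₀ : ℝ))) - 1)) ∧
    Summable (fun j : ℕ => ε ^ (2 * (a (j + 1)) ^ (1 - β))) ∧
    ∑' j : ℕ, ε ^ (2 * (a (j + 1)) ^ (1 - β)) ≤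
      ε ^ (2 * min (aStar ^ (1 - β)) 1) *
        (((j₀ : ℝ) - 1) +
          ∑' j : ℕ, ((1 : ℝ) / 2) ^ (Real.exp ((1 - β) * δ * ((j : ℝ) + (j₀ : ℝ))) - 1)) := by
  obtain ⟨hε0, hε1⟩ := hε
  obtain ⟨hβ0, hβ1⟩ := hβ
  have h1β : (0:ℝ) < 1 - β := by linarith
  have hc : 0 < (1 - β) * δ := mul_pos h1β hδ
  set c : ℝ := (1 - β) * δ with hcdef
  set T : ℕ → ℝ := fun j : ℕ =>
      ((1 : ℝ) / 2) ^ (Real.exp (c * ((j : ℝ) + (j₀ : ℝ))) - 1) with hTdef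
  have hTnonneg : ∀ j, 0 ≤ T j := fun j => Real.rpow_nonneg (by norm_num) _
  have hr0 : (0:ℝ) ≤ ((1:ℝ)/2) ^ c := Real.rpow_nonneg (by norm_num) _
  have hr1 : ((1:ℝ)/2) ^ c < 1 := Real.rpow_lt_one (by norm_num) (by norm_num) hc
  have hTle : ∀ j : ℕ, T j ≤ (((1:ℝ)/2) ^ c) ^ j := by
    intro j
    have hj0 : (0:ℝ) ≤ (j:ℝ) := Nat.cast_nonneg _
    have hj₀0 : (0:ℝ) ≤ (j₀:ℝ) := Nat.cast_nonneg _
    have h1 : c * (j:ℝ) ≤ Real.exp (c * ((j:ℝ) + (j₀:ℝ))) - 1 := by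
      have := Real.add_one_le_exp (c * ((j:ℝ) + (j₀:ℝ)))
      nlinarith
    calc T j ≤ ((1:ℝ)/2) ^ (c * (j:ℝ)) :=
          Real.rpow_le_rpow_of_exponent_ge (by norm_num) (by norm_num) h1
      _ = (((1:ℝ)/2) ^ c) ^ ((j:ℝ)) := Real.rpow_mul (by norm_num) _ _
      _ = (((1:ℝ)/2) ^ c) ^ j := Real.rpow_natCast _ j
  have hTsum : Summable T :=
    Summable.of_nonneg_of_le hTnonneg hTle (summable_geometric_of_lt_one hr0 hr1)
  refine ⟨hTsum, ?_⟩
  set m : ℝ := min (aStar ^ (1 - β)) 1 with hmdef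
  have hm0 : 0 < m := lt_min (Real.rpow_pos_of_pos haStar _) one_pos
  have hm1 : m ≤ 1 := min_le_right _ _
  set f : ℕ → ℝ := fun j : ℕ => ε ^ (2 * (a (j + 1)) ^ (1 - β)) with hfdef
  have hfnonneg : ∀ j, 0 ≤ f j := fun j => Real.rpow_nonneg hε0.le _
  have hfle : ∀ j, f j ≤ ε ^ (2 * m) := by
    intro j
    have h1 : aStar ^ (1 - β) ≤ (a (j + 1)) ^ (1 - β) :=
      Real.rpow_le_rpow haStar.le (ha (j + 1) (by omega)) h1β.le
    have h2 : m ≤ (a (j + 1)) ^ (1 - β) := le_trans (min_le_left _ _) h1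
    exact Real.rpow_le_rpow_of_exponent_ge hε0 hε1.le (by linarith)
  have hkey : ∀ k : ℕ, f (k + (j₀ - 1)) ≤ ε ^ (2 * m) * T k := by
    intro k
    have hidx : k + (j₀ - 1) + 1 = k + j₀ := by omega
    have hcast : ((k + j₀ : ℕ) : ℝ) = (k : ℝ) + (j₀ : ℝ) := by push_cast; ring
    have hga : Real.exp (δ * ((k:ℝ) + (j₀:ℝ))) ≤ a (k + j₀) := by
      have := hgrow (k + j₀) (by omega)
      rwa [hcast] at this
    have hexp0 : (0:ℝ) ≤ c * ((k:ℝ) + (j₀:ℝ)) := by positivity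
    have he1 : 1 ≤ Real.exp (c * ((k:ℝ) + (j₀:ℝ))) := Real.one_le_exp hexp0
    set e : ℝ := Real.exp (c * ((k:ℝ) + (j₀:ℝ))) with hedef
    have hea : e ≤ (a (k + j₀)) ^ (1 - β) := by
      have h1 : (Real.exp (δ * ((k:ℝ) + (j₀:ℝ)))) ^ (1 - β) ≤ (a (k + j₀)) ^ (1 - β) :=
        Real.rpow_le_rpow (Real.exp_pos _).le hga h1β.le
      have h2 : (Real.exp (δ * ((k:ℝ) + (j₀:ℝ)))) ^ (1 - β) = e := by
        rw [← Real.exp_mul, hedef, hcdef]; ring_nf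
      linarith [h1, h2.symm.le, h2.le]
    have hstep1 : f (k + (j₀ - 1)) ≤ ε ^ (2 * (m + e - 1)) := by
      have : 2 * (m + e - 1) ≤ 2 * (a (k + (j₀ - 1) + 1)) ^ (1 - β) := by
        rw [hidx]; linarith
      exact Real.rpow_le_rpow_of_exponent_ge hε0 hε1.le this
    have hsplit : ε ^ (2 * (m + e - 1)) = ε ^ (2 * m) * ε ^ (2 * (e - 1)) := by
      rw [← Real.rpow_add hε0]; ring_nf
    have hstep2 : ε ^ (2 * (e - 1)) ≤ ((1:ℝ)/2) ^ (e - 1) := by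
      have h1 : ε ^ (2 * (e - 1)) = (ε ^ (2:ℝ)) ^ (e - 1) :=
        Real.rpow_mul hε0.le _ _
      have h2 : ε ^ (2:ℝ) = ε ^ 2 := by
        rw [show ((2:ℝ)) = ((2:ℕ):ℝ) by norm_num, Real.rpow_natCast]
      rw [h1, h2]
      exact Real.rpow_le_rpow (sq_nonneg ε) hε2 (by linarith)
    calc f (k + (j₀ - 1)) ≤ ε ^ (2 * (m + e - 1)) := hstep1
      _ = ε ^ (2 * m) * ε ^ (2 * (e - 1)) := hsplit
      _ ≤ ε ^ (2 * m) * ((1:ℝ)/2) ^ (e - 1) := by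
          have := Real.rpow_nonneg (le_of_lt hε0) (2 * m)
          exact mul_le_mul_of_nonneg_left hstep2 this
      _ = ε ^ (2 * m) * T k := rfl
  have htailsum : Summable (fun k : ℕ => f (k + (j₀ - 1))) :=
    Summable.of_nonneg_of_le (fun k => hfnonneg _) hkey (hTsum.mul_left _)
  have hfsum : Summable f := (summable_nat_add_iff (j₀ - 1)).mp htailsum
  refine ⟨hfsum, ?_⟩
  have hsplitsum : (∑ i ∈ Finset.range (j₀ - 1), f i) + ∑' k, f (k + (j₀ - 1)) = ∑' j, f j :=
    Summable.sum_add_tsum_nat_add (j₀ - 1) hfsum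
  have hhead : (∑ i ∈ Finset.range (j₀ - 1), f i) ≤ ((j₀ : ℝ) - 1) * ε ^ (2 * m) := by
    have h1 : (∑ i ∈ Finset.range (j₀ - 1), f i) ≤
        ∑ i ∈ Finset.range (j₀ - 1), ε ^ (2 * m) :=
      Finset.sum_le_sum fun i _ => hfle i
    have h2 : (∑ i ∈ Finset.range (j₀ - 1), (ε ^ (2 * m) : ℝ)) =
        ((j₀ - 1 : ℕ) : ℝ) * ε ^ (2 * m) := by
      rw [Finset.sum_const, Finset.card_range, nsmul_eq_mul]
    have h3 : ((j₀ - 1 : ℕ) : ℝ) = (j₀ : ℝ) - 1 := by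
      have : (1:ℕ) ≤ j₀ := hj₀
      push_cast [Nat.cast_sub this]
      ring
    rw [h2, h3] at h1
    exact h1
  have htail : (∑' k, f (k + (j₀ - 1))) ≤ ε ^ (2 * m) * ∑' k, T k := by
    calc (∑' k, f (k + (j₀ - 1))) ≤ ∑' k, ε ^ (2 * m) * T k :=
          Summable.tsum_le_tsum hkey htailsum (hTsum.mul_left _)
      _ = ε ^ (2 * m) * ∑' k, T k := tsum_mul_left
  have := hsplitsum
  nlinarith [htail, hhead, this, Real.rpow_nonneg hε0.le (2 * m), hTnonneg 0]
end
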